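/- arXiv:1604.07070 — 4 statements merged into one kernel-verified Lean document; each statement's English description precedes it below -/
import Mathlib

section
/- Let n ≥ 2, and let f_i : ℝ^d → ℝ for i = 1,…,n each be convex and differentiable with L_i-Lipschitz continuous gradient; set L_max = max_i L_i and f = (1/n)Σ_{i=1}^n f_i. Let A ∈ ℝ^{p×d}, ρ > 0, u_* ∈ ℝ^p with ∇f(x_*) + ρAᵀu_* = 0, and J(x) = f(x) + ρ⟨u_*, Ax⟩. Fix x, x̃ ∈ ℝ^d and a batch size b with 1 ≤ b ≤ n. For each subset I ⊆ {1,…,n} with |I| = b, let v_I = (1/b)Σ_{i∈I}(∇f_i(x) − ∇f_i(x̃)) + ∇f(x̃). Then the average over all C(n,b) such subsets of ‖v_I − ∇f(x)‖² is at most 4 L_max β(b) (J(x) − J(x_*) + J(x̃) − J(x_*)), where β(b) = (n−b)/(b(n−1)). -/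
open scoped RealInnerProductSpace
open Matrix Finset

section Auxiliary

set_option linter.unusedSectionVars false

variable {E : Type*} [NormedAddCommGroup E] [InnerProductSpace ℝ E]

lemma line_hasDerivAt' (z u : E) (t : ℝ) :
    HasDerivAt (fun s : ℝ => z + s • u) u t := by
  simpa using (hasDerivAt_id t).smul_const u |>.const_add z

variable [CompleteSpace E]

lemma convex_first_order' {f : E → ℝ} {g : E} {z : E}
    (hc : ConvexOn ℝ Set.univ f) (hg : HasGradientAt f g z) (y : E) :
    f z + ⟪g, y - z⟫ ≤ f y := by
  set φ : ℝ → ℝ := fun t => f (z + t • (y - z)) with hφ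
  have hφc : ConvexOn ℝ Set.univ φ := by
    have h := hc.comp_affineMap (AffineMap.lineMap z y : ℝ →ᵃ[ℝ] E)
    have he : φ = f ∘ ⇑(AffineMap.lineMap z y) := by
      funext t
      simp [φ, Function.comp, AffineMap.lineMap_apply, add_comm, vsub_eq_sub]
    rw [he]
    simpa using h
  have hderiv : HasDerivAt φ ⟪g, y - z⟫ 0 := by
    have hz : z = z + (0:ℝ) • (y - z) := by simp
    have h1 := (hz ▸ hg.hasFDerivAt).comp_hasDerivAt 0 (line_hasDerivAt' z (y - z) 0)
    exact (by simpa using h1 : HasDerivAt (f ∘ fun s : ℝ => z + s • (y - z)) ⟪g, y - z⟫ 0)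
  have := hφc.le_slope_of_hasDerivAt (Set.mem_univ 0) (Set.mem_univ 1) one_pos hderiv
  simp only [slope_def_field, φ, zero_smul, add_zero, one_smul, add_sub_cancel] at this
  have h0 : (f y - f z) / (1 - 0) = f y - f z := by norm_num
  linarith [h0 ▸ this]

lemma descent_lemma' {f : E → ℝ} {g : E → E} {L : ℝ} (hL : 0 ≤ L)
    (hg : ∀ x, HasGradientAt f (g x) x)
    (hlip : ∀ y z, ‖g y - g z‖ ≤ L * ‖y - z‖) (y z : E) :
    f y ≤ f z + ⟪g z, y - z⟫ + L / 2 * ‖y - z‖ ^ 2 := by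
  set u := y - z with hu
  have hgc : Continuous g := by
    have : LipschitzWith (Real.toNNReal L) g := by
      apply LipschitzWith.of_dist_le_mul
      intro a b
      rw [dist_eq_norm, dist_eq_norm, Real.coe_toNNReal L hL]
      exact hlip a b
    exact this.continuous
  set ψ : ℝ → ℝ := fun t => ⟪g (z + t • u), u⟫ with hψ
  have hψc : Continuous ψ := by
    apply Continuous.inner
    · exact hgc.comp (by continuity)
    · exact continuous_const
  have hderiv : ∀ t ∈ Set.uIcc (0:ℝ) 1,
      HasDerivAt (fun s => f (z + s • u)) (ψ t) t := by
    intro t _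
    exact (hg (z + t • u)).hasFDerivAt.comp_hasDerivAt t (line_hasDerivAt' z u t)
  have hFTC : f (z + (1:ℝ) • u) - f (z + (0:ℝ) • u) = ∫ t in (0:ℝ)..1, ψ t :=
    (intervalIntegral.integral_eq_sub_of_hasDerivAt hderiv
      (hψc.intervalIntegrable 0 1)).symm
  have hmono : (∫ t in (0:ℝ)..1, ψ t) ≤ ∫ t in (0:ℝ)..1, (⟪g z, u⟫ + L * ‖u‖ ^ 2 * t) := by
    apply intervalIntegral.integral_mono_on zero_le_one (hψc.intervalIntegrable 0 1)
      ((Continuous.intervalIntegrable (by continuity) 0 1))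
    intro t ht
    have h1 : ψ t - ⟪g z, u⟫ = ⟪g (z + t • u) - g z, u⟫ := by
      rw [inner_sub_left]
    have h2 : ⟪g (z + t • u) - g z, u⟫ ≤ ‖g (z + t • u) - g z‖ * ‖u‖ :=
      real_inner_le_norm _ _
    have h3 : ‖g (z + t • u) - g z‖ ≤ L * (t * ‖u‖) := by
      have := hlip (z + t • u) z
      simpa [norm_smul, abs_of_nonneg ht.1] using this
    nlinarith [norm_nonneg u, mul_nonneg (mul_nonneg hL ht.1) (norm_nonneg u)]
  have hint : (∫ t in (0:ℝ)..1, (⟪g z, u⟫ + L * ‖u‖ ^ 2 * t))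
      = ⟪g z, u⟫ + L / 2 * ‖u‖ ^ 2 := by
    have hi2 : IntervalIntegrable (fun t : ℝ => L * ‖u‖ ^ 2 * t) MeasureTheory.volume 0 1 :=
      (continuous_const.mul continuous_id').intervalIntegrable 0 1
    rw [intervalIntegral.integral_add intervalIntegrable_const hi2,
      intervalIntegral.integral_const_mul, integral_id, intervalIntegral.integral_const]
    rw [smul_eq_mul]; ring
  have : f y - f z ≤ ⟪g z, u⟫ + L / 2 * ‖u‖ ^ 2 := by
    have h0 : f (z + (1:ℝ) • u) = f y := by simp [hu]
    have h1 : f (z + (0:ℝ) • u) = f z := by simp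
    rw [h0, h1] at hFTC
    linarith [hFTC ▸ (hmono.trans_eq hint)]
  linarith

lemma cocoercivity' {f : E → ℝ} {g : E → E} {L : ℝ} (hL : 0 ≤ L)
    (hc : ConvexOn ℝ Set.univ f)
    (hg : ∀ x, HasGradientAt f (g x) x)
    (hlip : ∀ y z, ‖g y - g z‖ ≤ L * ‖y - z‖) (y z : E) :
    ‖g y - g z‖ ^ 2 ≤ 2 * L * (f y - f z - ⟪g z, y - z⟫) := by
  rcases eq_or_lt_of_le hL with hL0 | hLpos
  · have h0 : ‖g y - g z‖ = 0 := by
      have := hlip y z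
      rw [← hL0] at this
      exact le_antisymm (by simpa using this) (norm_nonneg _)
    rw [h0, ← hL0]
    norm_num
  · set δ := g y - g z with hδ
    set w := y - L⁻¹ • δ with hw
    have h1 : f z + ⟪g z, w - z⟫ ≤ f w := convex_first_order' hc (hg z) w
    have h2 : f w ≤ f y + ⟪g y, w - y⟫ + L / 2 * ‖w - y‖ ^ 2 :=
      descent_lemma' hL hg hlip w y
    have e1 : w - y = -(L⁻¹ • δ) := by rw [hw]; abel
    have e2 : w - z = (y - z) - L⁻¹ • δ := by rw [hw]; abel
    have i1 : ⟪g z, w - z⟫ = ⟪g z, y - z⟫ - L⁻¹ * ⟪g z, δ⟫ := by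
      rw [e2, inner_sub_right, real_inner_smul_right]
    have i2 : ⟪g y, w - y⟫ = -(L⁻¹ * ⟪g y, δ⟫) := by
      rw [e1, inner_neg_right, real_inner_smul_right]
    have i3 : ‖w - y‖ ^ 2 = L⁻¹ ^ 2 * ‖δ‖ ^ 2 := by
      rw [e1, norm_neg, norm_smul, Real.norm_eq_abs, abs_of_nonneg (inv_nonneg.2 hL)]
      ring
    have i4 : ⟪g y, δ⟫ - ⟪g z, δ⟫ = ‖δ‖ ^ 2 := by
      rw [← inner_sub_left, ← hδ, real_inner_self_eq_norm_sq]
    rw [i1] at h1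
    rw [i2, i3] at h2
    have hL' : L ≠ 0 := ne_of_gt hLpos
    have key : L / 2 * (L⁻¹ ^ 2 * ‖δ‖ ^ 2) = 1 / (2 * L) * ‖δ‖ ^ 2 := by
      field_simp
    have key2 : L⁻¹ * ⟪g y, δ⟫ - L⁻¹ * ⟪g z, δ⟫ = L⁻¹ * ‖δ‖ ^ 2 := by
      rw [← mul_sub, i4]
    have hinv : L⁻¹ * ‖δ‖ ^ 2 - 1/(2*L) * ‖δ‖ ^ 2 = ‖δ‖^2 / (2*L) := by
      field_simp; ring
    have : ‖δ‖ ^ 2 / (2 * L) ≤ f y - f z - ⟪g z, y - z⟫ := by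
      nlinarith [h1, h2]
    calc ‖δ‖ ^ 2 = 2 * L * (‖δ‖ ^ 2 / (2 * L)) := by field_simp
    _ ≤ 2 * L * (f y - f z - ⟪g z, y - z⟫) := by
        apply mul_le_mul_of_nonneg_left this (by linarith)

lemma card_filter_superset' {α : Type*} [DecidableEq α] (u s : Finset α) (hsu : s ⊆ u)
    (b : ℕ) (hbs : s.card ≤ b) :
    ((powersetCard b u).filter fun I => s ⊆ I).card
      = (u.card - s.card).choose (b - s.card) := by
  rw [show u.card - s.card = (u \ s).card from (card_sdiff_of_subset hsu).symm,
    ← card_powersetCard (b - s.card) (u \ s)]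
  apply Finset.card_bij' (fun I _ => I \ s) (fun J _ => J ∪ s)
  · intro I hI
    simp only [mem_filter, mem_powersetCard] at hI
    obtain ⟨⟨hIu, hIc⟩, hsI⟩ := hI
    rw [mem_powersetCard]
    exact ⟨sdiff_subset_sdiff hIu Subset.rfl, by rw [card_sdiff_of_subset hsI, hIc]⟩
  · intro J hJ
    rw [mem_powersetCard] at hJ
    obtain ⟨hJu, hJc⟩ := hJ
    have hdisj : Disjoint J s := disjoint_of_subset_left hJu sdiff_disjoint
    simp only [mem_filter, mem_powersetCard]
    refine ⟨⟨union_subset (hJu.trans (sdiff_subset)) hsu, ?_⟩, subset_union_right⟩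
    rw [card_union_of_disjoint hdisj, hJc]
    omega
  · intro I hI
    simp only [mem_filter, mem_powersetCard] at hI
    exact sdiff_union_of_subset hI.2
  · intro J hJ
    rw [mem_powersetCard] at hJ
    have hdisj : Disjoint J s := disjoint_of_subset_left hJ.1 sdiff_disjoint
    rw [union_sdiff_right, sdiff_eq_self_of_disjoint hdisj]

lemma count_pair_one' {n b : ℕ} (i j : Fin n) (hij : i ≠ j) (hb : b = 1) :
    ((powersetCard b (univ : Finset (Fin n))).filter fun I => i ∈ I ∧ j ∈ I).card = 0 := by
  rw [card_eq_zero, filter_eq_empty_iff]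
  intro I hI
  rw [mem_powersetCard] at hI
  rintro ⟨hi, hj⟩
  have : ({i, j} : Finset (Fin n)) ⊆ I := by
    intro k hk; simp at hk; rcases hk with rfl | rfl <;> assumption
  have h2 : ({i, j} : Finset (Fin n)).card = 2 := card_pair hij
  have := card_le_card this
  omega

lemma variance_sum_identity' {n b : ℕ} (hb1 : 1 ≤ b) (c : Fin n → E)
    (hsum : ∑ i, c i = 0) :
    ∑ I ∈ powersetCard b (univ : Finset (Fin n)), ‖∑ i ∈ I, c i‖ ^ 2
      = (((n-1).choose (b-1) : ℝ)
          - ((if b = 1 then 0 else (n-2).choose (b-2) : ℕ) : ℝ)) * ∑ i, ‖c i‖ ^ 2 := by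
  classical
  set P := powersetCard b (univ : Finset (Fin n)) with hP
  set N1 : ℕ := (n-1).choose (b-1) with hN1
  set N2 : ℕ := if b = 1 then 0 else (n-2).choose (b-2) with hN2
  have huniv : (univ : Finset (Fin n)).card = n := by simp
  have hcount1 : ∀ i : Fin n, (P.filter fun I => i ∈ I ∧ i ∈ I).card = N1 := by
    intro i
    have he : (P.filter fun I => i ∈ I ∧ i ∈ I) = P.filter fun I => ({i} : Finset (Fin n)) ⊆ I := by
      apply filter_congr; intro I _; simp
    rw [he, hP, card_filter_superset' _ _ (subset_univ _) b (by simpa using hb1), huniv]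
    simp [hN1]
  have hcount2 : ∀ i j : Fin n, i ≠ j → (P.filter fun I => i ∈ I ∧ j ∈ I).card = N2 := by
    intro i j hij
    rcases eq_or_lt_of_le hb1 with hb | hb
    · rw [count_pair_one' i j hij hb.symm, hN2, if_pos hb.symm]
    · have hb2 : 2 ≤ b := hb
      have he : (P.filter fun I => i ∈ I ∧ j ∈ I)
          = P.filter fun I => ({i, j} : Finset (Fin n)) ⊆ I := by
        apply filter_congr; intro I _; simp [insert_subset_iff]
      rw [he, hP, card_filter_superset' _ _ (subset_univ _) b
        (by rw [card_pair hij]; exact hb2), huniv, card_pair hij, hN2,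
        if_neg (by omega)]
  have step1 : ∀ I : Finset (Fin n), ‖∑ i ∈ I, c i‖ ^ 2
      = ∑ i, ∑ j, (if i ∈ I ∧ j ∈ I then ⟪c i, c j⟫ else 0) := by
    intro I
    have h1 : ∀ (f : Fin n → ℝ), ∑ i ∈ I, f i = ∑ i, if i ∈ I then f i else 0 := by
      intro f; rw [Finset.sum_ite_mem, univ_inter]
    rw [← real_inner_self_eq_norm_sq, sum_inner]
    rw [show ∑ i ∈ I, ⟪c i, ∑ j ∈ I, c j⟫ = ∑ i ∈ I, ∑ j ∈ I, ⟪c i, c j⟫ from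
      sum_congr rfl fun i _ => inner_sum _ _ _]
    rw [h1 (fun i => ∑ j ∈ I, ⟪c i, c j⟫)]
    refine sum_congr rfl fun i _ => ?_
    rw [h1 (fun j => ⟪c i, c j⟫)]
    split_ifs with hi
    · exact sum_congr rfl fun j _ => by simp [hi]
    · rw [eq_comm, Finset.sum_eq_zero]; intro j _; simp [hi]
  calc ∑ I ∈ P, ‖∑ i ∈ I, c i‖ ^ 2
      = ∑ I ∈ P, ∑ i, ∑ j, (if i ∈ I ∧ j ∈ I then ⟪c i, c j⟫ else 0) :=
        sum_congr rfl fun I _ => step1 I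
    _ = ∑ i, ∑ j, ∑ I ∈ P, (if i ∈ I ∧ j ∈ I then ⟪c i, c j⟫ else 0) := by
        rw [Finset.sum_comm]
        exact sum_congr rfl fun i _ => Finset.sum_comm
    _ = ∑ i, ∑ j, ((P.filter fun I => i ∈ I ∧ j ∈ I).card : ℝ) * ⟪c i, c j⟫ := by
        refine sum_congr rfl fun i _ => sum_congr rfl fun j _ => ?_
        rw [← Finset.sum_filter, Finset.sum_const, nsmul_eq_mul]
    _ = ∑ i, ∑ j, ((N2 : ℝ) * ⟪c i, c j⟫
          + (if i = j then ((N1 : ℝ) - (N2 : ℝ)) * ⟪c i, c j⟫ else 0)) := by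
        refine sum_congr rfl fun i _ => sum_congr rfl fun j _ => ?_
        rcases eq_or_ne i j with rfl | hij
        · rw [hcount1 i, if_pos rfl]; ring
        · rw [hcount2 i j hij, if_neg hij]; ring
    _ = (N2 : ℝ) * ⟪∑ i, c i, ∑ j, c j⟫
          + ∑ i, ((N1 : ℝ) - (N2 : ℝ)) * ⟪c i, c i⟫ := by
        rw [sum_inner, Finset.mul_sum]
        rw [← Finset.sum_add_distrib]
        refine sum_congr rfl fun i _ => ?_
        rw [Finset.sum_add_distrib, inner_sum, Finset.mul_sum]
        congr 1
        simp
    _ = ((N1 : ℝ) - (N2 : ℝ)) * ∑ i, ‖c i‖ ^ 2 := by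
        rw [hsum]
        simp only [inner_zero_left, mul_zero, zero_add]
        rw [Finset.mul_sum]
        exact sum_congr rfl fun i _ => by rw [real_inner_self_eq_norm_sq]

lemma coeff_eval' {n b : ℕ} (hn : 2 ≤ n) (hb1 : 1 ≤ b) (hbn : b ≤ n) :
    ((n.choose b : ℝ))⁻¹ * ((b:ℝ)⁻¹)^2 * (((n-1).choose (b-1) : ℝ)
        - ((if b = 1 then 0 else (n-2).choose (b-2) : ℕ) : ℝ))
      = ((n:ℝ) - (b:ℝ)) / ((b:ℝ) * ((n:ℝ) - 1)) * (n:ℝ)⁻¹ := by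
  have hAnat : n * ((n-1).choose (b-1)) = n.choose b * b := by
    have := Nat.add_one_mul_choose_eq (n-1) (b-1)
    rwa [Nat.sub_add_cancel (by omega : 1 ≤ n), Nat.sub_add_cancel hb1] at this
  have hBnat : (n-1) * (if b = 1 then 0 else (n-2).choose (b-2))
      = ((n-1).choose (b-1)) * (b-1) := by
    rcases eq_or_lt_of_le hb1 with hb | hb
    · simp [← hb]
    · have hb2 : 2 ≤ b := hb
      rw [if_neg (by omega)]
      have := Nat.add_one_mul_choose_eq (n-2) (b-2)
      rwa [(by omega : n - 2 + 1 = n - 1), (by omega : b - 2 + 1 = b - 1)] at this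
  have hA : (n:ℝ) * ((n-1).choose (b-1) : ℝ) = (n.choose b : ℝ) * (b:ℝ) := by
    exact_mod_cast congrArg (Nat.cast : ℕ → ℝ) hAnat
  have hB : ((n:ℝ) - 1) * ((if b = 1 then 0 else (n-2).choose (b-2) : ℕ) : ℝ)
      = ((n-1).choose (b-1) : ℝ) * ((b:ℝ) - 1) := by
    have := congrArg (Nat.cast : ℕ → ℝ) hBnat
    push_cast [Nat.cast_sub (by omega : 1 ≤ n), Nat.cast_sub hb1] at this
    rw [apply_ite (Nat.cast : ℕ → ℝ), Nat.cast_zero]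
    exact this
  have hC : (0:ℝ) < (n.choose b : ℝ) := by exact_mod_cast Nat.choose_pos hbn
  have hbpos : (0:ℝ) < (b:ℝ) := by exact_mod_cast hb1
  have hn2 : (2:ℝ) ≤ (n:ℝ) := by exact_mod_cast hn
  have hn1 : (0:ℝ) < (n:ℝ) - 1 := by linarith
  have hnpos : (0:ℝ) < (n:ℝ) := by linarith
  rw [apply_ite (Nat.cast : ℕ → ℝ), Nat.cast_zero] at hB ⊢
  have key : (n:ℝ) * ((n:ℝ) - 1) * (((n-1).choose (b-1) : ℝ)
      - (if b = 1 then (0:ℝ) else ((n-2).choose (b-2) : ℝ)))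
      = ((n:ℝ) - (b:ℝ)) * (n.choose b : ℝ) * (b:ℝ) := by
    linear_combination ((n:ℝ)-1)*hA - (n:ℝ)*hB - ((b:ℝ)-1)*hA
  field_simp
  linear_combination key

end Auxiliary

set_option maxHeartbeats 1000000 in
/-- Paper's Proposition 1: variance bound for the mini-batch SVRG gradient
estimator. With `f = (1/n) ∑ f_i`, `J(x) = f(x) + ρ⟪u_*, Ax⟫`, and
`v_I = (1/b) ∑_{i ∈ I} (∇f_i(x) - ∇f_i(x̃)) + ∇f(x̃)`, the average of
`‖v_I - ∇f(x)‖²` over all size-`b` subsets `I` is at most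
`4 L_max β(b) (J(x) - J(x_*) + J(x̃) - J(x_*))` with `β(b) = (n-b)/(b(n-1))`. -/
theorem svrg_admm_variance_bound {d p : ℕ} (n : ℕ) (hn : 2 ≤ n)
    (fi : Fin n → EuclideanSpace ℝ (Fin d) → ℝ)
    (gf : Fin n → EuclideanSpace ℝ (Fin d) → EuclideanSpace ℝ (Fin d))
    (L : Fin n → ℝ) (Lmax : ℝ)
    (hconv : ∀ i, ConvexOn ℝ Set.univ (fi i))
    (hdiff : ∀ i x, HasGradientAt (fi i) (gf i x) x)
    (hlip : ∀ i x x', ‖gf i x - gf i x'‖ ≤ L i * ‖x - x'‖)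
    (hmax_le : ∀ i, L i ≤ Lmax) (hmax_mem : ∃ i, L i = Lmax)
    (A : Matrix (Fin p) (Fin d) ℝ) (ρ : ℝ) (hρ : 0 < ρ)
    (us : EuclideanSpace ℝ (Fin p)) (xs : EuclideanSpace ℝ (Fin d))
    (hopt : (n : ℝ)⁻¹ • (∑ i, gf i xs) + ρ • Matrix.toEuclideanLin Aᵀ us = 0)
    (x xt : EuclideanSpace ℝ (Fin d)) (b : ℕ) (hb1 : 1 ≤ b) (hbn : b ≤ n) :
    (n.choose b : ℝ)⁻¹ *
        ∑ I ∈ Finset.powersetCard b (Finset.univ : Finset (Fin n)),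
          ‖((b : ℝ)⁻¹ • ∑ i ∈ I, (gf i x - gf i xt) + (n : ℝ)⁻¹ • ∑ i, gf i xt)
              - (n : ℝ)⁻¹ • ∑ i, gf i x‖ ^ 2
      ≤ 4 * Lmax * (((n : ℝ) - (b : ℝ)) / ((b : ℝ) * ((n : ℝ) - 1))) *
          ((((n : ℝ)⁻¹ * ∑ i, fi i x + ρ * ⟪us, Matrix.toEuclideanLin A x⟫)
              - ((n : ℝ)⁻¹ * ∑ i, fi i xs + ρ * ⟪us, Matrix.toEuclideanLin A xs⟫))
            + (((n : ℝ)⁻¹ * ∑ i, fi i xt + ρ * ⟪us, Matrix.toEuclideanLin A xt⟫)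
              - ((n : ℝ)⁻¹ * ∑ i, fi i xs + ρ * ⟪us, Matrix.toEuclideanLin A xs⟫))) := by
  classical
  rcases Nat.eq_zero_or_pos d with rfl | hd
  · -- trivial case: the space is a subsingleton
    have hz : ∀ v : EuclideanSpace ℝ (Fin 0), ‖v‖ = 0 := fun v => by
      rw [Subsingleton.elim v 0, norm_zero]
    have hx : x = xs := Subsingleton.elim _ _
    have hxt : xt = xs := Subsingleton.elim _ _
    rw [hx, hxt]
    simp only [hz]
    simp
  -- main case
  have hnR : (0:ℝ) < n := by exact_mod_cast (by omega : 0 < n)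
  have hbR : (0:ℝ) < b := by exact_mod_cast hb1
  have hn1R : (0:ℝ) < (n:ℝ) - 1 := by
    have : (2:ℝ) ≤ n := by exact_mod_cast hn
    linarith
  have hLnn : ∀ i, 0 ≤ L i := by
    intro i
    have hv : ‖(EuclideanSpace.single (⟨0, hd⟩ : Fin d) (1:ℝ))‖ = 1 := by
      simp [EuclideanSpace.norm_single]
    have h := hlip i (x + EuclideanSpace.single (⟨0, hd⟩ : Fin d) (1:ℝ)) x
    rw [add_sub_cancel_left, hv, mul_one] at h
    exact le_trans (norm_nonneg _) h
  have hLmax : 0 ≤ Lmax := by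
    obtain ⟨i, hi⟩ := hmax_mem
    exact hi ▸ hLnn i
  set G : Fin n → EuclideanSpace ℝ (Fin d) := fun i => gf i x - gf i xt with hG
  set q : EuclideanSpace ℝ (Fin d) := (n:ℝ)⁻¹ • ∑ i, G i with hq
  set c : Fin n → EuclideanSpace ℝ (Fin d) := fun i => G i - q with hc
  have hsumG : ∑ i, G i = (n:ℝ) • q := by
    rw [hq, smul_smul, mul_inv_cancel₀ (ne_of_gt hnR), one_smul]
  have hsumc : ∑ i, c i = 0 := by
    simp only [hc, Finset.sum_sub_distrib, Finset.sum_const, Finset.card_univ,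
      Fintype.card_fin, hsumG]
    rw [← Nat.cast_smul_eq_nsmul ℝ n q]
    simp
  have hqeq : q = (n:ℝ)⁻¹ • ∑ i, gf i x - (n:ℝ)⁻¹ • ∑ i, gf i xt := by
    rw [hq, hG]
    rw [Finset.sum_sub_distrib, smul_sub]
  have hvec : ∀ I ∈ Finset.powersetCard b (Finset.univ : Finset (Fin n)),
      ((b : ℝ)⁻¹ • ∑ i ∈ I, (gf i x - gf i xt) + (n : ℝ)⁻¹ • ∑ i, gf i xt)
          - (n : ℝ)⁻¹ • ∑ i, gf i x = (b:ℝ)⁻¹ • ∑ i ∈ I, c i := by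
    intro I hI
    have hIcard : I.card = b := (Finset.mem_powersetCard.1 hI).2
    have h1 : ∑ i ∈ I, c i = (∑ i ∈ I, G i) - (b:ℝ) • q := by
      simp only [hc, Finset.sum_sub_distrib, Finset.sum_const, hIcard]
      rw [← Nat.cast_smul_eq_nsmul ℝ b q]
    rw [h1, smul_sub, smul_smul, inv_mul_cancel₀ (ne_of_gt hbR), one_smul, hqeq]
    abel
  -- evaluate the left-hand side exactly
  have hLHS : (n.choose b : ℝ)⁻¹ *
        ∑ I ∈ Finset.powersetCard b (Finset.univ : Finset (Fin n)),
          ‖((b : ℝ)⁻¹ • ∑ i ∈ I, (gf i x - gf i xt) + (n : ℝ)⁻¹ • ∑ i, gf i xt)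
              - (n : ℝ)⁻¹ • ∑ i, gf i x‖ ^ 2
      = (((n:ℝ) - (b:ℝ)) / ((b:ℝ) * ((n:ℝ) - 1)) * (n:ℝ)⁻¹) * ∑ i, ‖c i‖ ^ 2 := by
    rw [Finset.sum_congr rfl (fun I hI => by rw [hvec I hI])]
    have hnorm : ∀ I : Finset (Fin n), ‖(b:ℝ)⁻¹ • ∑ i ∈ I, c i‖ ^ 2
        = ((b:ℝ)⁻¹)^2 * ‖∑ i ∈ I, c i‖ ^ 2 := by
      intro I
      rw [norm_smul, Real.norm_eq_abs, abs_of_nonneg (by positivity : (0:ℝ) ≤ (b:ℝ)⁻¹),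
        mul_pow]
    rw [Finset.sum_congr rfl fun I _ => hnorm I, ← Finset.mul_sum,
      variance_sum_identity' hb1 c hsumc, ← mul_assoc, ← mul_assoc,
      coeff_eval' hn hb1 hbn, mul_assoc]
  rw [hLHS]
  -- adjoint identity
  have hadj : ∀ v : EuclideanSpace ℝ (Fin d),
      ⟪Matrix.toEuclideanLin Aᵀ us, v⟫ = ⟪us, Matrix.toEuclideanLin A v⟫ := by
    intro v
    have h : Aᵀ = Aᴴ := by ext i j; simp [conjTranspose_apply]
    rw [h, Matrix.toEuclideanLin_conjTranspose_eq_adjoint]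
    exact LinearMap.adjoint_inner_left _ _ _
  have hS : ∑ i, gf i xs = -(((n:ℝ) * ρ) • Matrix.toEuclideanLin Aᵀ us) := by
    have h1 : (n:ℝ)⁻¹ • (∑ i, gf i xs) = -(ρ • Matrix.toEuclideanLin Aᵀ us) :=
      eq_neg_of_add_eq_zero_left hopt
    calc ∑ i, gf i xs = (n:ℝ) • ((n:ℝ)⁻¹ • ∑ i, gf i xs) := by
          rw [smul_smul, mul_inv_cancel₀ (ne_of_gt hnR), one_smul]
    _ = (n:ℝ) • (-(ρ • Matrix.toEuclideanLin Aᵀ us)) := by rw [h1]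
    _ = -(((n:ℝ) * ρ) • Matrix.toEuclideanLin Aᵀ us) := by rw [smul_neg, smul_smul]
  have hinner_sum : ∀ z : EuclideanSpace ℝ (Fin d),
      ∑ i, ⟪gf i xs, z⟫ = -(((n:ℝ) * ρ) * ⟪us, Matrix.toEuclideanLin A z⟫) := by
    intro z
    rw [← sum_inner, hS, inner_neg_left, real_inner_smul_left, hadj]
  have hJgen : ∀ z : EuclideanSpace ℝ (Fin d),
      (n:ℝ)⁻¹ * (∑ i, (fi i z - fi i xs - ⟪gf i xs, z - xs⟫))
      = ((n:ℝ)⁻¹ * ∑ i, fi i z + ρ * ⟪us, Matrix.toEuclideanLin A z⟫)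
        - ((n:ℝ)⁻¹ * ∑ i, fi i xs + ρ * ⟪us, Matrix.toEuclideanLin A xs⟫) := by
    intro z
    have h1 : ∑ i, (fi i z - fi i xs - ⟪gf i xs, z - xs⟫)
        = ∑ i, fi i z - ∑ i, fi i xs - ∑ i, ⟪gf i xs, z - xs⟫ := by
      rw [Finset.sum_sub_distrib, Finset.sum_sub_distrib]
    rw [h1, hinner_sum (z - xs),
      (map_sub (Matrix.toEuclideanLin A) z xs :
        Matrix.toEuclideanLin A (z - xs) = _), inner_sub_right]
    field_simp
    ring
  -- per-function co-coercivity, summed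
  have hkey : ∀ z : EuclideanSpace ℝ (Fin d),
      ∑ i, ‖gf i z - gf i xs‖ ^ 2
        ≤ 2 * Lmax * ∑ i, (fi i z - fi i xs - ⟪gf i xs, z - xs⟫) := by
    intro z
    rw [Finset.mul_sum]
    apply Finset.sum_le_sum
    intro i _
    have hco := cocoercivity' (hLnn i) (hconv i) (hdiff i) (hlip i) z xs
    have hD : 0 ≤ fi i z - fi i xs - ⟪gf i xs, z - xs⟫ := by
      have := convex_first_order' (hconv i) (hdiff i xs) z
      linarith
    nlinarith [hmax_le i, hco, hD]
  -- bound ∑ ‖c i‖² by ∑ ‖G i‖²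
  have hc_le : ∑ i, ‖c i‖ ^ 2 ≤ ∑ i, ‖G i‖ ^ 2 := by
    have hexp : ∀ i : Fin n, ‖c i‖ ^ 2 = ‖G i‖ ^ 2 - 2 * ⟪G i, q⟫ + ‖q‖ ^ 2 :=
      fun i => norm_sub_sq_real _ _
    rw [Finset.sum_congr rfl fun i _ => hexp i, Finset.sum_add_distrib,
      Finset.sum_sub_distrib, Finset.sum_const, card_univ, Fintype.card_fin,
      nsmul_eq_mul]
    have h2 : ∑ i, 2 * ⟪G i, q⟫ = 2 * ((n:ℝ) * ‖q‖ ^ 2) := by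
      rw [← Finset.mul_sum, ← sum_inner, hsumG, real_inner_smul_left,
        real_inner_self_eq_norm_sq]
    rw [h2]
    have hq0 : 0 ≤ (n:ℝ) * ‖q‖ ^ 2 := mul_nonneg hnR.le (sq_nonneg _)
    linarith
  -- bound ‖G i‖² via the two anchored differences
  have hG_le : ∀ i : Fin n, ‖G i‖ ^ 2
      ≤ 2 * ‖gf i x - gf i xs‖ ^ 2 + 2 * ‖gf i xt - gf i xs‖ ^ 2 := by
    intro i
    have he : G i = (gf i x - gf i xs) - (gf i xt - gf i xs) := by
      simp only [hG]; abel
    rw [he, norm_sub_sq_real]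
    nlinarith [abs_real_inner_le_norm (gf i x - gf i xs) (gf i xt - gf i xs),
      neg_abs_le (⟪gf i x - gf i xs, gf i xt - gf i xs⟫ : ℝ),
      sq_nonneg (‖gf i x - gf i xs‖ - ‖gf i xt - gf i xs‖)]
  have hsplit : ∑ i, ‖G i‖ ^ 2
      ≤ 2 * ∑ i, ‖gf i x - gf i xs‖ ^ 2 + 2 * ∑ i, ‖gf i xt - gf i xs‖ ^ 2 := by
    rw [Finset.mul_sum, Finset.mul_sum, ← Finset.sum_add_distrib]
    exact Finset.sum_le_sum fun i _ => hG_le i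
  set Sx := ∑ i, (fi i x - fi i xs - ⟪gf i xs, x - xs⟫) with hSx
  set St := ∑ i, (fi i xt - fi i xs - ⟪gf i xs, xt - xs⟫) with hSt
  have htot : ∑ i, ‖c i‖ ^ 2 ≤ 4 * Lmax * (Sx + St) := by
    have k1 := hkey x
    have k2 := hkey xt
    rw [← hSx] at k1
    rw [← hSt] at k2
    linarith
  rw [← hJgen x, ← hJgen xt, ← hSx, ← hSt]
  have hβnn : 0 ≤ ((n:ℝ) - (b:ℝ)) / ((b:ℝ) * ((n:ℝ) - 1)) * (n:ℝ)⁻¹ := by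
    apply mul_nonneg
    · apply div_nonneg
      · have : (b:ℝ) ≤ (n:ℝ) := by exact_mod_cast hbn
        linarith
      · positivity
    · positivity
  calc ((n:ℝ) - (b:ℝ)) / ((b:ℝ) * ((n:ℝ) - 1)) * (n:ℝ)⁻¹ * ∑ i, ‖c i‖ ^ 2
      ≤ ((n:ℝ) - (b:ℝ)) / ((b:ℝ) * ((n:ℝ) - 1)) * (n:ℝ)⁻¹ * (4 * Lmax * (Sx + St)) :=
        mul_le_mul_of_nonneg_left htot hβnn
    _ = 4 * Lmax * (((n:ℝ) - (b:ℝ)) / ((b:ℝ) * ((n:ℝ) - 1)))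
          * ((n:ℝ)⁻¹ * Sx + (n:ℝ)⁻¹ * St) := by ring
end

section
/- Let L_f, λ_f, L_max, σ_max, σ_min, β be positive reals with λ_f ≤ L_f ≤ L_max, let 0 < κ̃ < 1, and set h_f = L_f/λ_f, h_A = √(σ_max/σ_min), h_Q = L_max/λ_f. For η > 0 with κ̃ − 4L_max η β(1 + κ̃) > 0, define m(η) = (1/(λ_f η) + 4L_max η β + 2 h_A √h_f)/(κ̃ − 4L_max η β(1 + κ̃)). Let δ = 1/(4 L_max λ_f β (1 + 2(1 + 1/κ̃) h_A √h_f)), a = (1 + κ̃)/(κ̃ λ_f + 2(1 + κ̃)√(L_f λ_f) h_A), and η̃ = √(a² + δ) − a. Suppose β ≥ M, where M = (κ̃ h_f L_f/L_max)/(8((1 + κ̃)(h_f + h_A√h_f) + κ̃/2)). Then: (i) η̃ ≤ 1/L_f; (ii) for every η with 0 < η ≤ 1/L_f and κ̃ − 4L_max ηβ(1 + κ̃) > 0, m(η) ≥ m(η̃); and (iii) m(η̃) = (8βh_Q/κ̃²)(√((1 + κ̃)² + κ̃²/(16β²L_max²δ)) + 1 + κ̃) + 2h_A√h_f/κ̃.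 -/
set_option maxHeartbeats 2000000


/-- Paper's Proposition 4, case 1: with `ρ = ρ_*`, target factor `κ̃ = kt`,
required inner-iteration count `m(η)`, and `β ≥ M`, the stepsize `η_* = η̃ = √(a² + δ) - a`
satisfies `η̃ ≤ 1/L_f`, minimizes `m(η)` over `0 < η ≤ 1/L_f` (with the factor positive),
and yields the stated closed-form `m(η̃)`. -/
theorem svrg_admm_opt_stepsize_case1 (Lf lamf Lmax σmax σmin β kt : ℝ)
    (hlamf : 0 < lamf) (hlam_le : lamf ≤ Lf) (hLf_le : Lf ≤ Lmax)
    (hσmax : 0 < σmax) (hσmin : 0 < σmin) (hβ : 0 < β)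
    (hkt0 : 0 < kt) (hkt1 : kt < 1) :
    let hf := Lf / lamf
    let hA := Real.sqrt (σmax / σmin)
    let hQ := Lmax / lamf
    let mfun : ℝ → ℝ := fun η =>
      (1 / (lamf * η) + 4 * Lmax * η * β + 2 * hA * Real.sqrt hf)
        / (kt - 4 * Lmax * η * β * (1 + kt))
    let δ := 1 / (4 * Lmax * lamf * β * (1 + 2 * (1 + 1 / kt) * hA * Real.sqrt hf))
    let a := (1 + kt) / (kt * lamf + 2 * (1 + kt) * Real.sqrt (Lf * lamf) * hA)
    let ηt := Real.sqrt (a ^ 2 + δ) - a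
    let M := (kt * hf * Lf / Lmax) / (8 * ((1 + kt) * (hf + hA * Real.sqrt hf) + kt / 2))
    M ≤ β →
      ηt ≤ 1 / Lf
        ∧ (∀ η : ℝ, 0 < η → η ≤ 1 / Lf → 0 < kt - 4 * Lmax * η * β * (1 + kt) →
            mfun ηt ≤ mfun η)
        ∧ mfun ηt
            = 8 * β * hQ / kt ^ 2 *
                (Real.sqrt ((1 + kt) ^ 2 + kt ^ 2 / (16 * β ^ 2 * Lmax ^ 2 * δ)) + 1 + kt)
              + 2 * hA * Real.sqrt hf / kt := by
  intro hf hA hQ mfun δ a ηt M hM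
  have hLf : 0 < Lf := lt_of_lt_of_le hlamf hlam_le
  have hL : 0 < Lmax := lt_of_lt_of_le hLf hLf_le
  have hhf : 0 < hf := div_pos hLf hlamf
  have hhA : 0 < hA := Real.sqrt_pos.2 (div_pos hσmax hσmin)
  set c : ℝ := hA * Real.sqrt hf with hc
  have hcpos : 0 < c := mul_pos hhA (Real.sqrt_pos.2 hhf)
  set B : ℝ := 4 * Lmax * β with hB
  have hBpos : 0 < B := by
    rw [hB]; exact mul_pos (mul_pos (by norm_num) hL) hβ
  set K : ℝ := kt + 2 * (1 + kt) * c with hK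
  have hKpos : 0 < K := by
    rw [hK]
    have := mul_pos (mul_pos (by norm_num : (0:ℝ) < 2) (by linarith : (0:ℝ) < 1 + kt)) hcpos
    linarith
  have hlne : lamf ≠ 0 := hlamf.ne'
  have hkne : kt ≠ 0 := hkt0.ne'
  have hLfne : Lf ≠ 0 := hLf.ne'
  have hLne : Lmax ≠ 0 := hL.ne'
  have hβne : β ≠ 0 := hβ.ne'
  have hBne : B ≠ 0 := hBpos.ne'
  have hKne : K ≠ 0 := hKpos.ne'
  have hcne : c ≠ 0 := hcpos.ne'
  have hc2 : 2 * hA * Real.sqrt hf = 2 * c := by rw [hc]; ring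
  -- √(Lf·λ)·hA = λ·c
  have hsf : Real.sqrt (Lf * lamf) * hA = lamf * c := by
    have h1 : Lf * lamf = lamf ^ 2 * hf := by
      show Lf * lamf = lamf ^ 2 * (Lf / lamf); field_simp
    rw [h1, Real.sqrt_mul (sq_nonneg lamf), Real.sqrt_sq hlamf.le, hc]; ring
  have ha : a = (1 + kt) / (lamf * K) := by
    show (1 + kt) / (kt * lamf + 2 * (1 + kt) * Real.sqrt (Lf * lamf) * hA) = _
    congr 1
    rw [hK]
    linear_combination (2 * (1 + kt)) * hsf
  have ha' : a * (lamf * K) = 1 + kt := by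
    rw [ha]; field_simp
  have hapos : 0 < a := by
    rw [ha]; exact div_pos (by linarith) (mul_pos hlamf hKpos)
  have e1 : 0 < 1 + 1 / kt := by
    have := one_div_pos.mpr hkt0; linarith
  have h7 : 0 < 1 + 2 * (1 + 1 / kt) * hA * Real.sqrt hf := by
    have := mul_pos (mul_pos (mul_pos (by norm_num : (0:ℝ) < 2) e1) hhA)
      (Real.sqrt_pos.2 hhf)
    linarith
  have hdpos : 0 < 4 * Lmax * lamf * β * (1 + 2 * (1 + 1 / kt) * hA * Real.sqrt hf) :=
    mul_pos (mul_pos (mul_pos (mul_pos (by norm_num : (0:ℝ) < 4) hL) hlamf) hβ) h7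
  have hδ' : δ = kt / (lamf * B * K) := by
    show 1 / (4 * Lmax * lamf * β * (1 + 2 * (1 + 1 / kt) * hA * Real.sqrt hf)) = _
    rw [div_eq_div_iff hdpos.ne' (mul_ne_zero (mul_ne_zero hlne hBne) hKne), hB, hK, hc]
    field_simp
    ring
  have hδpos : 0 < δ := by
    rw [hδ']; exact div_pos hkt0 (mul_pos (mul_pos hlamf hBpos) hKpos)
  have hδne : δ ≠ 0 := hδpos.ne'
  have hδ : δ * (lamf * B * K) = kt := by
    rw [hδ']; field_simp
  set s : ℝ := Real.sqrt (a ^ 2 + δ) with hsdef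
  have hs2 : s ^ 2 = a ^ 2 + δ :=
    Real.sq_sqrt (by nlinarith [sq_nonneg a, hδpos] : (0:ℝ) ≤ a ^ 2 + δ)
  have hsnn : 0 ≤ s := Real.sqrt_nonneg _
  have hs_gt : a < s := by nlinarith [hs2, hδpos, hapos, hsnn]
  have hηt : ηt = s - a := rfl
  have ht_pos : 0 < ηt := by rw [hηt]; linarith
  have htne : ηt ≠ 0 := ht_pos.ne'
  have ht : lamf * K * ηt = lamf * K * s - (1 + kt) := by
    rw [hηt]; linear_combination -1 * ha'
  have hP : B * (lamf * K * s) ^ 2 = B * (1 + kt) ^ 2 + lamf * kt * K := by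
    linear_combination (B * lamf ^ 2 * K ^ 2) * hs2 + (B * (lamf * K * a + 1 + kt)) * ha'
      + (lamf * K) * hδ
  have hKeq : B * (lamf * K * ηt ^ 2 + 2 * (1 + kt) * ηt) = kt := by
    have h2 : lamf * K * (B * (lamf * K * ηt ^ 2 + 2 * (1 + kt) * ηt)) = lamf * K * kt := by
      linear_combination (B * (lamf * K * ηt + lamf * K * s + 1 + kt)) * ht + hP
    exact mul_left_cancel₀ (mul_ne_zero hlne hKne) h2
  have hDt : 0 < kt - B * ηt * (1 + kt) := by
    have h3 : kt - B * ηt * (1 + kt) = B * lamf * K * ηt ^ 2 + B * (1 + kt) * ηt := by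
      linear_combination -1 * hKeq
    rw [h3]
    have t1 : 0 < B * lamf * K * ηt ^ 2 :=
      mul_pos (mul_pos (mul_pos hBpos hlamf) hKpos) (pow_pos ht_pos 2)
    have t2 : 0 < B * (1 + kt) * ηt :=
      mul_pos (mul_pos hBpos (by linarith)) ht_pos
    linarith
  -- `mfun` in terms of `B`, `c`
  have hm : ∀ x : ℝ, mfun x = (1 / (lamf * x) + B * x + 2 * c) / (kt - B * x * (1 + kt)) := by
    intro x
    show (1 / (lamf * x) + 4 * Lmax * x * β + 2 * hA * Real.sqrt hf)
        / (kt - 4 * Lmax * x * β * (1 + kt)) = _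
    rw [hB, hc2]
    ring_nf
  -- the budget hypothesis, cleared
  have hM' : (kt * hf * Lf / Lmax) / (8 * ((1 + kt) * (hf + c) + kt / 2)) ≤ β := hM
  have hDm : 0 < 8 * ((1 + kt) * (hf + c) + kt / 2) := by
    have := mul_pos (by linarith : (0:ℝ) < 1 + kt) (by linarith [hhf, hcpos] : (0:ℝ) < hf + c)
    linarith
  have hMB : kt * Lf ^ 2 ≤ B * (2 * (1 + kt) * Lf + lamf * K) := by
    rw [div_le_iff₀ hDm] at hM'
    have h3 : kt * Lf ^ 2 = (kt * hf * Lf / Lmax) * (lamf * Lmax) := by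
      show kt * Lf ^ 2 = (kt * (Lf / lamf) * Lf / Lmax) * (lamf * Lmax)
      field_simp
    have h4 : β * (8 * ((1 + kt) * (hf + c) + kt / 2)) * (lamf * Lmax)
        = B * (2 * (1 + kt) * Lf + lamf * K) := by
      show β * (8 * ((1 + kt) * (Lf / lamf + c) + kt / 2)) * (lamf * Lmax) = _
      rw [hB, hK]; field_simp; ring
    calc kt * Lf ^ 2 = (kt * hf * Lf / Lmax) * (lamf * Lmax) := h3
      _ ≤ β * (8 * ((1 + kt) * (hf + c) + kt / 2)) * (lamf * Lmax) :=
          mul_le_mul_of_nonneg_right hM' (mul_pos hlamf hL).le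
      _ = B * (2 * (1 + kt) * Lf + lamf * K) := h4
  clear_value c B K
  -- Part (i)
  have part1 : ηt ≤ 1 / Lf := by
    have key : 2 * a / Lf + 1 / Lf ^ 2 = (2 * (1 + kt) * Lf + lamf * K) / (lamf * K * Lf ^ 2) := by
      rw [ha]; field_simp
    have hδle : δ ≤ 2 * a / Lf + 1 / Lf ^ 2 := by
      rw [key, hδ', div_le_div_iff₀ (mul_pos (mul_pos hlamf hBpos) hKpos)
        (mul_pos (mul_pos hlamf hKpos) (pow_pos hLf 2))]
      calc kt * (lamf * K * Lf ^ 2) = lamf * K * (kt * Lf ^ 2) := by ring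
        _ ≤ lamf * K * (B * (2 * (1 + kt) * Lf + lamf * K)) :=
            mul_le_mul_of_nonneg_left hMB (mul_pos hlamf hKpos).le
        _ = (2 * (1 + kt) * Lf + lamf * K) * (lamf * B * K) := by ring
    have hsq : (a + 1 / Lf) ^ 2 = a ^ 2 + (2 * a / Lf + 1 / Lf ^ 2) := by ring
    have h5 : a ^ 2 + δ ≤ (a + 1 / Lf) ^ 2 := by rw [hsq]; linarith
    have hinvLf : 0 < 1 / Lf := one_div_pos.mpr hLf
    have hs_le : s ≤ a + 1 / Lf := by
      rw [hsdef]
      calc Real.sqrt (a ^ 2 + δ) ≤ Real.sqrt ((a + 1 / Lf) ^ 2) := Real.sqrt_le_sqrt h5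
        _ = a + 1 / Lf := Real.sqrt_sq (by linarith)
    rw [hηt]; linarith
  refine ⟨part1, ?_, ?_⟩
  · -- Part (ii): minimality
    intro η hη hηle hDη0
    have hηne : η ≠ 0 := hη.ne'
    have hDη : 0 < kt - B * η * (1 + kt) := by
      rw [hB]; linarith [hDη0]
    rw [hm, hm, div_le_div_iff₀ hDt hDη]
    have expand : (1 / (lamf * η) + B * η + 2 * c) * (kt - B * ηt * (1 + kt))
        - (1 / (lamf * ηt) + B * ηt + 2 * c) * (kt - B * η * (1 + kt))
        = (η - ηt) ^ 2 * (B * (lamf * K * ηt + (1 + kt))) / (lamf * η * ηt) := by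
      rw [eq_div_iff (mul_ne_zero (mul_ne_zero hlne hηne) htne)]
      field_simp
      linear_combination (η - ηt) * hKeq - (B*(η-ηt)*η*lamf*ηt) * hK
    have hfac : 0 < B * (lamf * K * ηt + (1 + kt)) := by
      have := mul_pos (mul_pos hlamf hKpos) ht_pos
      exact mul_pos hBpos (by linarith)
    have hnum : 0 ≤ (η - ηt) ^ 2 * (B * (lamf * K * ηt + (1 + kt))) / (lamf * η * ηt) :=
      div_nonneg (mul_nonneg (sq_nonneg _) hfac.le) (mul_pos (mul_pos hlamf hη) ht_pos).le
    linarith [expand, hnum]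
  · -- Part (iii): closed form
    have hsqrt : Real.sqrt ((1 + kt) ^ 2 + kt ^ 2 / (16 * β ^ 2 * Lmax ^ 2 * δ))
        = lamf * K * s := by
      have harg : (1 + kt) ^ 2 + kt ^ 2 / (16 * β ^ 2 * Lmax ^ 2 * δ) = (lamf * K * s) ^ 2 := by
        rw [hδ']
        field_simp
        linear_combination (-B) * hP + (-(B + 4*Lmax*β)*((1+kt)^2 - (lamf*K*s)^2)) * hB
      rw [harg, Real.sqrt_sq (mul_nonneg (mul_pos hlamf hKpos).le hsnn)]
    have hQdef : hQ = Lmax / lamf := rfl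
    have hu : 0 < lamf * K * ηt := mul_pos (mul_pos hlamf hKpos) ht_pos
    have hu_gt : 1 + kt < lamf * K * s := by linarith [ht, hu]
    have hDden : 0 < kt * (lamf * K * s - (1 + kt)) := mul_pos hkt0 (by linarith)
    have hFA : (0:ℝ) < 2 * (1 + kt) * lamf ^ 2 * B * K ^ 2 :=
      mul_pos (mul_pos (mul_pos (mul_pos (by norm_num : (0:ℝ) < 2) (by linarith))
        (pow_pos hlamf 2)) hBpos) (pow_pos hKpos 2)
    have hFB : (0:ℝ) < 8 * (1 + kt) * lamf ^ 2 * K ^ 2 * β * Lmax :=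
      mul_pos (mul_pos (mul_pos (mul_pos (mul_pos (by norm_num : (0:ℝ) < 8) (by linarith))
        (pow_pos hlamf 2)) (pow_pos hKpos 2)) hβ) hL
    have hMain : (1 / (lamf * ηt) + B * ηt + 2 * c) * (kt * (lamf * K * s - (1 + kt)))
        = (2 * kt + 2 * c * (lamf * K * s + 1 + kt)) * (kt - B * ηt * (1 + kt)) := by
      field_simp
      linear_combination (-(1 + lamf*ηt^2*B + 2*lamf*ηt*c)*kt + 2*lamf*ηt*c*(kt - ηt*B*(1+kt))) * ht
        + (2*lamf*ηt*K*(1+c*lamf*ηt) - (1 + lamf*ηt^2*B + 2*lamf*ηt*c)*lamf*K*ηt + lamf*K*ηt*B*ηt*lamf*ηt) * hKeq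
        + (2*lamf*ηt*(kt - ηt*B*(1+kt)) - lamf*K*ηt*B*ηt*lamf*ηt) * hK
    have hmval : mfun ηt
        = (2 * kt + 2 * c * (lamf * K * s + 1 + kt)) / (kt * (lamf * K * s - (1 + kt))) := by
      rw [hm, div_eq_div_iff hDt.ne' hDden.ne']
      linear_combination hMain
    have hQdef : hQ = Lmax / lamf := rfl
    rw [hmval, hQdef, hsqrt, div_eq_iff hDden.ne', hc2]
    field_simp
    apply mul_left_cancel₀ hFB.ne'
    linear_combination ((8*(1+kt)*lamf^2*K^2*β*Lmax)*(-2)) * hP + ((8*(1+kt)*lamf^2*K^2*β*Lmax)*(-2*kt*lamf)) * hK + ((8*(1+kt)*lamf^2*K^2*β*Lmax)*(2*((lamf*K*s)^2 - (1+kt)^2))) * hB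
end

section
/- Let L_f, λ_f, L_max, σ_max, σ_min be positive reals with λ_f ≤ L_f ≤ L_max, β ≥ 0, and 0 < κ̃ < 1, and set h_f = L_f/λ_f, h_A = √(σ_max/σ_min). For η > 0 with κ̃ − 4L_max ηβ(1 + κ̃) > 0, define m(η) = (1/(λ_f η) + 4L_max ηβ + 2h_A√h_f)/(κ̃ − 4L_max ηβ(1 + κ̃)). Suppose β ≤ M, where M = (κ̃ h_f L_f/L_max)/(8((1 + κ̃)(h_f + h_A√h_f) + κ̃/2)), and that κ̃ − 4L_max β(1 + κ̃)/L_f > 0. Then for every η with 0 < η ≤ 1/L_f and κ̃ − 4L_max ηβ(1 + κ̃) > 0, m(η) ≥ m(1/L_f), and m(1/L_f) = (h_f + 4βL_max/L_f + 2h_A√h_f)/(κ̃ − (1 + κ̃)4βL_max/L_f). -/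
set_option maxHeartbeats 1000000 in
/-- Paper's Proposition 4, case 2: with `ρ = ρ_*`, target factor `κ̃ = kt`,
required inner-iteration count `m(η)`, and `β ≤ M` (and the denominator positive at
`η = 1/L_f`), the boundary stepsize `η_* = 1/L_f` minimizes `m(η)` over `0 < η ≤ 1/L_f`,
with `m(1/L_f) = (h_f + 4βL_max/L_f + 2h_A√h_f)/(κ̃ - (1+κ̃)4βL_max/L_f)`. -/
theorem svrg_admm_opt_stepsize_case2 (Lf lamf Lmax σmax σmin β kt : ℝ)
    (hlamf : 0 < lamf) (hlam_le : lamf ≤ Lf) (hLf_le : Lf ≤ Lmax)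
    (hσmax : 0 < σmax) (hσmin : 0 < σmin) (hβ : 0 ≤ β)
    (hkt0 : 0 < kt) (hkt1 : kt < 1) :
    let hf := Lf / lamf
    let hA := Real.sqrt (σmax / σmin)
    let mfun : ℝ → ℝ := fun η =>
      (1 / (lamf * η) + 4 * Lmax * η * β + 2 * hA * Real.sqrt hf)
        / (kt - 4 * Lmax * η * β * (1 + kt))
    let M := (kt * hf * Lf / Lmax) / (8 * ((1 + kt) * (hf + hA * Real.sqrt hf) + kt / 2))
    β ≤ M →
    0 < kt - 4 * Lmax * β * (1 + kt) / Lf →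
      (∀ η : ℝ, 0 < η → η ≤ 1 / Lf → 0 < kt - 4 * Lmax * η * β * (1 + kt) →
          mfun (1 / Lf) ≤ mfun η)
        ∧ mfun (1 / Lf)
            = (hf + 4 * β * Lmax / Lf + 2 * hA * Real.sqrt hf)
                / (kt - (1 + kt) * (4 * β * Lmax / Lf)) := by
  intro hf hA mfun M hβM hDstar
  have hLf : 0 < Lf := lt_of_lt_of_le hlamf hlam_le
  have hLmax : 0 < Lmax := lt_of_lt_of_le hLf hLf_le
  have hfdef : hf = Lf / lamf := rfl
  have hhf : 0 < hf := div_pos hLf hlamf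
  have hAnn : 0 ≤ hA := Real.sqrt_nonneg _
  set s := Real.sqrt hf with hs
  have hsnn : 0 ≤ s := Real.sqrt_nonneg _
  -- key inequality from β ≤ M, cleared of denominators
  have hkey : 8*Lmax*β*(1+kt)*Lf + 8*Lmax*β*(1+kt)*(hA*s)*lamf + 4*Lmax*β*kt*lamf
      ≤ kt*Lf*Lf := by
    have hDm : 0 < 8 * ((1 + kt) * (hf + hA * s) + kt / 2) := by positivity
    have h1 : β * (8 * ((1 + kt) * (hf + hA * s) + kt / 2)) ≤ kt * hf * Lf / Lmax := by
      rw [← le_div_iff₀ hDm]; exact hβM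
    have h2 : β * (8 * ((1 + kt) * (hf + hA * s) + kt / 2)) * Lmax ≤ kt * hf * Lf := by
      rw [← le_div_iff₀ hLmax] at *; exact h1
    have h3 := mul_le_mul_of_nonneg_right h2 hlamf.le
    rw [hfdef] at h3
    have e : β * (8 * ((1 + kt) * (Lf / lamf + hA * s) + kt / 2)) * Lmax * lamf
        = 8*Lmax*β*(1+kt)*Lf + 8*Lmax*β*(1+kt)*(hA*s)*lamf + 4*Lmax*β*kt*lamf := by
      field_simp; ring
    have e2 : kt * (Lf / lamf) * Lf * lamf = kt * Lf * Lf := by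
      field_simp
    linarith [h3, e.symm.le, e2.le]
  constructor
  · intro η hη hηle hDη
    have hηLf : η * Lf ≤ 1 := by
      rw [le_div_iff₀ hLf] at hηle; linarith
    have hDstar' : 0 < kt - 4 * Lmax * (1/Lf) * β * (1 + kt) := by
      have e : 4 * Lmax * (1/Lf) * β * (1 + kt) = 4 * Lmax * β * (1 + kt) / Lf := by ring
      rw [e]; exact hDstar
    show (1 / (lamf * (1/Lf)) + 4 * Lmax * (1/Lf) * β + 2 * hA * s)
        / (kt - 4 * Lmax * (1/Lf) * β * (1 + kt))
      ≤ (1 / (lamf * η) + 4 * Lmax * η * β + 2 * hA * s)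
        / (kt - 4 * Lmax * η * β * (1 + kt))
    rw [div_le_div_iff₀ hDstar' hDη, ← sub_nonneg]
    have t1 : 0 ≤ 4*Lmax*β*kt*lamf*(1 - η*Lf) :=
      mul_nonneg (by positivity) (by linarith)
    have t2 : 0 ≤ 4*Lmax*β*(1+kt)*Lf*(1 - η*Lf) :=
      mul_nonneg (by positivity) (by linarith)
    have t3 : 0 ≤ 8*Lmax*β*(1+kt)*(hA*s)*lamf*(1 - η*Lf) :=
      mul_nonneg (by positivity) (by linarith)
    have hbr : 0 ≤ kt*Lf^2 - 4*Lmax*β*kt*lamf*η*Lf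
        - 4*Lmax*β*(1+kt)*(η*Lf^2 + Lf)
        - 4*Lmax*β*(1+kt)*(2*hA*s)*lamf*η*Lf := by linarith [hkey, t1, t2, t3]
    have hint : 0 ≤ (1 - η*Lf) * (kt*Lf^2 - 4*Lmax*β*kt*lamf*η*Lf
        - 4*Lmax*β*(1+kt)*(η*Lf^2 + Lf)
        - 4*Lmax*β*(1+kt)*(2*hA*s)*lamf*η*Lf) :=
      mul_nonneg (by linarith) hbr
    have hp : (0:ℝ) < lamf * η * Lf^2 := by positivity
    have key_eq : ((1 / (lamf * η) + 4 * Lmax * η * β + 2 * hA * s)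
          * (kt - 4 * Lmax * (1/Lf) * β * (1 + kt))
        - (1 / (lamf * (1/Lf)) + 4 * Lmax * (1/Lf) * β + 2 * hA * s)
          * (kt - 4 * Lmax * η * β * (1 + kt))) * (lamf * η * Lf^2)
        = (1 - η*Lf) * (kt*Lf^2 - 4*Lmax*β*kt*lamf*η*Lf
          - 4*Lmax*β*(1+kt)*(η*Lf^2 + Lf)
          - 4*Lmax*β*(1+kt)*(2*hA*s)*lamf*η*Lf) := by
      field_simp
      ring
    exact (mul_nonneg_iff_of_pos_right hp).mp (key_eq ▸ hint)
  · show (1 / (lamf * (1/Lf)) + 4 * Lmax * (1/Lf) * β + 2 * hA * s)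
        / (kt - 4 * Lmax * (1/Lf) * β * (1 + kt)) = _
    have e1 : 1 / (lamf * (1/Lf)) + 4 * Lmax * (1/Lf) * β + 2 * hA * s
        = hf + 4 * β * Lmax / Lf + 2 * hA * s := by
      rw [hfdef, mul_one_div, one_div_div]; ring
    have e2 : kt - 4 * Lmax * (1/Lf) * β * (1 + kt)
        = kt - (1 + kt) * (4 * β * Lmax / Lf) := by ring
    rw [e1, e2]
end

section
/- Let f : ℝ^d → ℝ be convex and differentiable with L_f-Lipschitz continuous gradient, g : ℝ^{d̃} → ℝ convex, A ∈ ℝ^{p×d}, B ∈ ℝ^{p×d̃}, c ∈ ℝ^p, ρ > 0, and let (x_*, y_*, u_*) with subgradient v of g at y_* satisfy ∇f(x_*) + ρAᵀu_* = 0, v + ρBᵀu_* = 0, Ax_* + By_* = c. Let G ∈ ℝ^{d×d} be symmetric with G − I positive semidefinite, and let 0 < η < 1/L_f. Let T ≥ 1 and let (x_t)_{t=0}^T, (y_t)_{t=1}^T, (u_t)_{t=0}^T satisfy, for t = 1,…,T: y_t minimizes y ↦ g(y) + (ρ/2)‖Ax_{t−1} + By − c + u_{t−1}‖²; x_t minimizes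 x ↦ ⟨∇f(x_{t−1}), x⟩ + (ρ/2)‖Ax + By_t − c + u_{t−1}‖² + (1/(2η))⟨x − x_{t−1}, G(x − x_{t−1})⟩; and u_t = u_{t−1} + Ax_t + By_t − c. Let x̄ = (1/T)Σ_{t=1}^T x_t and ȳ = (1/T)Σ_{t=1}^T y_t. Then for every ζ > 0, R(x̄, ȳ) + ζ‖Ax̄ + Bȳ − c‖ ≤ (1/(2ηT))⟨x₀ − x_*, (G + ηρAᵀA)(x₀ − x_*)⟩ + (ρ/T)(‖u₀ − u_*‖² + ζ²/ρ²), where R(x, y) = f(x) − f(x_*) − ⟨∇f(x_*), x − x_*⟩ + g(y) − g(y_*) − ⟨v, y − y_*⟩. -/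
open scoped RealInnerProductSpace
open Matrix Finset

set_option maxHeartbeats 1000000

lemma quad_all_zero (L Q : ℝ) (hQ : 0 ≤ Q) (h : ∀ s : ℝ, 0 ≤ s * L + s ^ 2 * Q) : L = 0 := by
  have h1 := h (-L / (Q + 1))
  have hQ1 : (0:ℝ) < Q + 1 := by linarith
  have he : (-L / (Q + 1)) * L + (-L / (Q + 1)) ^ 2 * Q = -L ^ 2 / (Q + 1) ^ 2 := by
    field_simp; ring
  rw [he] at h1
  have h2 : 0 ≤ (-L ^ 2 / (Q + 1) ^ 2) * (Q + 1) ^ 2 := mul_nonneg h1 (sq_nonneg _)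
  have h3 : (-L ^ 2 / (Q + 1) ^ 2) * (Q + 1) ^ 2 = -L ^ 2 := by field_simp
  nlinarith [sq_nonneg L]

lemma quad_pos_nonneg (L Q : ℝ) (hQ : 0 ≤ Q)
    (h : ∀ θ : ℝ, 0 < θ → θ ≤ 1 → 0 ≤ θ * L + θ ^ 2 * Q) : 0 ≤ L := by
  by_contra hL
  push_neg at hL
  set θ := -L / (Q + 1 - L) with hθdef
  have hden : (0:ℝ) < Q + 1 - L := by linarith
  have hθpos : 0 < θ := div_pos (by linarith) hden
  have hθ1 : θ ≤ 1 := by rw [hθdef, div_le_one hden]; linarith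
  have := h θ hθpos hθ1
  have hθQ : θ * Q < -L := by
    rw [hθdef, div_mul_eq_mul_div, div_lt_iff₀ hden]; nlinarith
  nlinarith [mul_pos hθpos hθpos]

section analysis
variable {E : Type*} [NormedAddCommGroup E] [InnerProductSpace ℝ E] [CompleteSpace E]

lemma grad_line_hasDerivAt (f : E → ℝ) (gf : E → E) (hdiff : ∀ x, HasGradientAt f (gf x) x)
    (a δ : E) (t : ℝ) :
    HasDerivAt (fun s : ℝ => f (a + s • δ)) ⟪gf (a + t • δ), δ⟫ t := by
  have h1 : HasDerivAt (fun s : ℝ => a + s • δ) δ t := by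
    simpa using ((hasDerivAt_id t).smul_const δ).const_add a
  have h2 := ((hdiff (a + t • δ)).hasFDerivAt.comp_hasDerivAt t h1)
  simpa [InnerProductSpace.toDual_apply_apply, Function.comp_def] using h2

lemma descent_lemma (f : E → ℝ) (gf : E → E) (Lf : ℝ)
    (hdiff : ∀ x, HasGradientAt f (gf x) x)
    (hlip : ∀ x x', ‖gf x - gf x'‖ ≤ Lf * ‖x - x'‖) (a b : E) :
    f b ≤ f a + ⟪gf a, b - a⟫ + Lf / 2 * ‖b - a‖ ^ 2 := by
  set δ := b - a with hδ
  set ψ : ℝ → ℝ := fun t => f (a + t • δ) - t * ⟪gf a, δ⟫ - Lf / 2 * t ^ 2 * ‖δ‖ ^ 2 with hψ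
  have hψd : ∀ t : ℝ, HasDerivAt ψ
      (⟪gf (a + t • δ), δ⟫ - ⟪gf a, δ⟫ - Lf * t * ‖δ‖ ^ 2) t := by
    intro t
    have h1 := grad_line_hasDerivAt f gf hdiff a δ t
    have h2 : HasDerivAt (fun s : ℝ => s * ⟪gf a, δ⟫) ⟪gf a, δ⟫ t := by
      simpa using (hasDerivAt_id t).mul_const (⟪gf a, δ⟫ : ℝ)
    have h3 : HasDerivAt (fun s : ℝ => Lf / 2 * s ^ 2 * ‖δ‖ ^ 2) (Lf * t * ‖δ‖ ^ 2) t := by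
      have h4 := ((hasDerivAt_pow 2 t).const_mul (Lf / 2)).mul_const (‖δ‖ ^ 2)
      exact h4.congr_deriv (by ring)
    exact (h1.sub h2).sub h3
  have hmono : AntitoneOn ψ (Set.Icc (0:ℝ) 1) := by
    apply antitoneOn_of_deriv_nonpos (convex_Icc 0 1)
    · exact fun t _ => ((hψd t).differentiableAt).continuousAt.continuousWithinAt
    · exact fun t _ => ((hψd t).differentiableAt).differentiableWithinAt
    · intro t ht
      rw [interior_Icc] at ht
      rw [(hψd t).deriv]
      have hins : (⟪gf (a + t • δ), δ⟫ : ℝ) - ⟪gf a, δ⟫ = ⟪gf (a + t • δ) - gf a, δ⟫ := by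
        rw [inner_sub_left]
      rw [hins]
      have hb1 : (⟪gf (a + t • δ) - gf a, δ⟫ : ℝ) ≤ ‖gf (a + t • δ) - gf a‖ * ‖δ‖ :=
        real_inner_le_norm _ _
      have hb2 : ‖gf (a + t • δ) - gf a‖ ≤ Lf * (t * ‖δ‖) := by
        have := hlip (a + t • δ) a
        simpa [norm_smul, abs_of_pos ht.1] using this
      nlinarith [norm_nonneg δ, norm_nonneg (gf (a + t • δ) - gf a), ht.1.le]
  have hle := hmono (Set.mem_Icc.mpr ⟨le_refl 0, zero_le_one⟩)
      (Set.mem_Icc.mpr ⟨zero_le_one, le_refl 1⟩) zero_le_one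
  have h0 : ψ 0 = f a := by simp [hψ]
  have h1 : ψ 1 = f b - ⟪gf a, δ⟫ - Lf / 2 * ‖δ‖ ^ 2 := by simp [hψ, hδ]
  rw [h0, h1] at hle
  linarith

lemma convex_grad_ineq (f : E → ℝ) (gf : E → E) (hconv : ConvexOn ℝ Set.univ f)
    (hdiff : ∀ x, HasGradientAt f (gf x) x) (a z : E) :
    f a + ⟪gf a, z - a⟫ ≤ f z := by
  set δ := z - a with hδ
  set φ : ℝ → ℝ := fun t => f (a + t • δ) with hφ
  have hd : HasDerivAt φ ⟪gf a, δ⟫ 0 := by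
    simpa using grad_line_hasDerivAt f gf hdiff a δ 0
  have key : Filter.Tendsto (fun t : ℝ => t⁻¹ • (φ (0 + t) - φ 0)) (nhdsWithin 0 (Set.Ioi 0))
      (nhds ⟪gf a, δ⟫) := hd.tendsto_slope_zero_right
  have hub : ∀ᶠ t in nhdsWithin (0:ℝ) (Set.Ioi 0),
      t⁻¹ • (φ (0 + t) - φ 0) ≤ f z - f a := by
    filter_upwards [Ioc_mem_nhdsGT zero_lt_one] with t ht
    have hconv2 := hconv.2 (Set.mem_univ a) (Set.mem_univ z) (by linarith [ht.2] : (0:ℝ) ≤ 1 - t)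
      ht.1.le (by ring)
    have hpt : (1 - t) • a + t • z = a + t • δ := by rw [hδ]; module
    rw [hpt] at hconv2
    have hφt : φ t ≤ (1 - t) * f a + t * f z := by simpa [hφ, smul_eq_mul] using hconv2
    have hφ0 : φ 0 = f a := by simp [hφ]
    rw [zero_add, hφ0, smul_eq_mul, inv_mul_le_iff₀ ht.1]
    nlinarith [ht.1]
  have := le_of_tendsto key hub
  linarith

lemma expand_smul_quad (Gm : E →ₗ[ℝ] E) (hGs : ∀ x y : E, ⟪Gm x, y⟫ = ⟪x, Gm y⟫)
    (dd h : E) (s : ℝ) :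
    (⟪dd + s • h, Gm (dd + s • h)⟫ : ℝ)
      = ⟪dd, Gm dd⟫ + 2 * (s * ⟪Gm dd, h⟫) + s ^ 2 * ⟪h, Gm h⟫ := by
  have e1 : (⟪h, Gm dd⟫ : ℝ) = ⟪Gm dd, h⟫ := real_inner_comm _ _
  have e2 : (⟪dd, Gm h⟫ : ℝ) = ⟪Gm dd, h⟫ := (hGs dd h).symm
  simp only [LinearMap.map_add, LinearMap.map_smul, inner_add_left, inner_add_right,
    real_inner_smul_left, real_inner_smul_right, e1, e2]
  ring

lemma expand_sub_quad (Gm : E →ₗ[ℝ] E) (hGs : ∀ x y : E, ⟪Gm x, y⟫ = ⟪x, Gm y⟫)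
    (a dd : E) :
    (⟪a - dd, Gm (a - dd)⟫ : ℝ) = ⟪a, Gm a⟫ - 2 * ⟪Gm dd, a⟫ + ⟪dd, Gm dd⟫ := by
  have e1 : (⟪a, Gm dd⟫ : ℝ) = ⟪Gm dd, a⟫ := real_inner_comm _ _
  have e2 : (⟪dd, Gm a⟫ : ℝ) = ⟪Gm dd, a⟫ := (hGs dd a).symm
  simp only [LinearMap.map_sub, inner_sub_left, inner_sub_right, e1, e2]
  ring

end analysis

section step
variable {E Et F : Type*} [NormedAddCommGroup E] [InnerProductSpace ℝ E] [CompleteSpace E]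
  [NormedAddCommGroup Et] [InnerProductSpace ℝ Et]
  [NormedAddCommGroup F] [InnerProductSpace ℝ F]

lemma admm_step
    (f : E → ℝ) (gf : E → E) (g : Et → ℝ)
    (LA : E →ₗ[ℝ] F) (LB : Et →ₗ[ℝ] F)
    (Gm : E →ₗ[ℝ] E) (hGs : ∀ x y : E, ⟪Gm x, y⟫ = ⟪x, Gm y⟫)
    (hGpos : ∀ x : E, ‖x‖ ^ 2 ≤ ⟪x, Gm x⟫)
    (c : F) (ρ Lf η : ℝ) (hρ : 0 < ρ) (hη0 : 0 < η) (hηLf : Lf / 2 ≤ 1 / (2 * η))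
    (hconv : ConvexOn ℝ Set.univ f)
    (hdiff : ∀ x, HasGradientAt f (gf x) x)
    (hlip : ∀ x x', ‖gf x - gf x'‖ ≤ Lf * ‖x - x'‖)
    (hgconv : ConvexOn ℝ Set.univ g)
    (xs : E) (ys : Et) (us : F) (v : Et)
    (hopt1 : ∀ w : E, ⟪gf xs, w⟫ = -(ρ * ⟪us, LA w⟫))
    (hopt2 : ∀ w : Et, ⟪v, w⟫ = -(ρ * ⟪us, LB w⟫))
    (hopt3 : LA xs + LB ys = c)
    (x0 x1 : E) (y1 : Et) (u0 u1 : F)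
    (hu1 : u1 = u0 + LA x1 + LB y1 - c)
    (hymin : IsMinOn (fun yv => g yv + ρ / 2 * ‖LA x0 + LB yv - c + u0‖ ^ 2) Set.univ y1)
    (hxmin : IsMinOn (fun xv => ⟪gf x0, xv⟫ + ρ / 2 * ‖LA xv + LB y1 - c + u0‖ ^ 2
      + 1 / (2 * η) * ⟪xv - x0, Gm (xv - x0)⟫) Set.univ x1)
    (lam : F) :
    f x1 - f xs - ⟪gf xs, x1 - xs⟫ + (g y1 - g ys - ⟪v, y1 - ys⟫)
      + ρ * ⟪lam - us, LA x1 + LB y1 - c⟫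
    ≤ 1 / (2 * η) * ((⟪x0 - xs, Gm (x0 - xs)⟫ + η * ρ * ‖LA (x0 - xs)‖ ^ 2)
        - (⟪x1 - xs, Gm (x1 - xs)⟫ + η * ρ * ‖LA (x1 - xs)‖ ^ 2))
      + ρ / 2 * (‖u0 - lam‖ ^ 2 - ‖u1 - lam‖ ^ 2) := by
  have hη2 : (0:ℝ) < 2 * η := by linarith
  have hu1P : u1 = LA x1 + LB y1 - c + u0 := by rw [hu1]; abel
  -- (1) stationarity of the x-update
  have hstat : ∀ h : E, ⟪gf x0, h⟫ + ρ * ⟪u1, LA h⟫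
      + 1 / (2 * η) * (2 * ⟪Gm (x1 - x0), h⟫) = 0 := by
    intro h
    apply quad_all_zero _ (ρ / 2 * ‖LA h‖ ^ 2 + 1 / (2 * η) * ⟪h, Gm h⟫)
    · have h1 : (0:ℝ) ≤ ⟪h, Gm h⟫ := le_trans (sq_nonneg _) (hGpos h)
      positivity
    · intro s
      have hmin := isMinOn_iff.mp hxmin (x1 + s • h) (Set.mem_univ _)
      have hT1 : (⟪gf x0, x1 + s • h⟫ : ℝ) = ⟪gf x0, x1⟫ + s * ⟪gf x0, h⟫ := by
        rw [inner_add_right, real_inner_smul_right]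
      have hT2v : LA (x1 + s • h) + LB y1 - c + u0
          = (LA x1 + LB y1 - c + u0) + s • LA h := by
        rw [map_add, LinearMap.map_smul]; abel
      have hT2 : ‖(LA x1 + LB y1 - c + u0) + s • LA h‖ ^ 2
          = ‖LA x1 + LB y1 - c + u0‖ ^ 2 + 2 * (s * ⟪LA x1 + LB y1 - c + u0, LA h⟫)
            + s ^ 2 * ‖LA h‖ ^ 2 := by
        rw [norm_add_sq_real, real_inner_smul_right, norm_smul]
        simp [mul_pow, sq_abs]
      have hT3v : (x1 + s • h) - x0 = (x1 - x0) + s • h := by abel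
      rw [hT3v] at hmin
      rw [hT1, hT2v, hT2, expand_smul_quad Gm hGs (x1 - x0) h s] at hmin
      have hup : (⟪LA x1 + LB y1 - c + u0, LA h⟫ : ℝ) = ⟪u1, LA h⟫ := by rw [hu1P]
      rw [hup] at hmin
      nlinarith [hmin]
  -- (2) y-update inequality
  have hyineq : 0 ≤ (g ys - g y1)
      + ρ * ⟪LA x0 + LB y1 - c + u0, LB (ys - y1)⟫ := by
    apply quad_pos_nonneg _ (ρ / 2 * ‖LB (ys - y1)‖ ^ 2) (by positivity)
    intro θ hθ0 hθ1
    have hmin := isMinOn_iff.mp hymin (y1 + θ • (ys - y1)) (Set.mem_univ _)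
    have hT2v : LA x0 + LB (y1 + θ • (ys - y1)) - c + u0
        = (LA x0 + LB y1 - c + u0) + θ • LB (ys - y1) := by
      rw [map_add, LinearMap.map_smul]; abel
    have hT2 : ‖(LA x0 + LB y1 - c + u0) + θ • LB (ys - y1)‖ ^ 2
        = ‖LA x0 + LB y1 - c + u0‖ ^ 2
          + 2 * (θ * ⟪LA x0 + LB y1 - c + u0, LB (ys - y1)⟫)
          + θ ^ 2 * ‖LB (ys - y1)‖ ^ 2 := by
      rw [norm_add_sq_real, real_inner_smul_right, norm_smul]
      simp [mul_pow, sq_abs]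
    have hcv : g (y1 + θ • (ys - y1)) ≤ (1 - θ) * g y1 + θ * g ys := by
      have h2 := hgconv.2 (Set.mem_univ y1) (Set.mem_univ ys)
        (by linarith : (0:ℝ) ≤ 1 - θ) hθ0.le (by ring)
      have hpt : (1 - θ) • y1 + θ • ys = y1 + θ • (ys - y1) := by module
      rw [hpt] at h2
      simpa [smul_eq_mul] using h2
    rw [hT2v, hT2] at hmin
    nlinarith [hmin, hcv]
  -- vector identities
  have hr' : LA x1 + LB y1 - c = LA (x1 - xs) + LB (y1 - ys) := by
    rw [← hopt3, map_sub, map_sub]; abel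
  have hq : LA x0 + LB y1 - c + u0 = u1 - LA (x1 - x0) := by
    rw [hu1, map_sub]; abel
  -- f-part
  have hdes := descent_lemma f gf Lf hdiff hlip x0 x1
  have hcvf := convex_grad_ineq f gf hconv hdiff x0 xs
  have hsplit : (⟪gf x0, x1 - xs⟫ : ℝ) = ⟪gf x0, x1 - x0⟫ + ⟪gf x0, x0 - xs⟫ := by
    rw [← inner_add_right]; congr 1; abel
  have hneg : (⟪gf x0, xs - x0⟫ : ℝ) = -⟪gf x0, x0 - xs⟫ := by
    rw [show xs - x0 = -(x0 - xs) by abel, inner_neg_right]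
  have hfpart : f x1 - f xs ≤ ⟪gf x0, x1 - xs⟫ + Lf / 2 * ‖x1 - x0‖ ^ 2 := by
    rw [hsplit]; rw [hneg] at hcvf; linarith
  have h1opt := hopt1 (x1 - xs)
  have h2opt := hopt2 (y1 - ys)
  have ha1 := hstat (x1 - xs)
  -- g-part rewrite
  have hqe : (⟪LA x0 + LB y1 - c + u0, LB (ys - y1)⟫ : ℝ)
      = -⟪u1, LB (y1 - ys)⟫ + ⟪LA (x1 - x0), LB (y1 - ys)⟫ := by
    rw [hq, show LB (ys - y1) = -(LB (y1 - ys)) by rw [← map_neg]; congr 1; abel]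
    simp only [inner_neg_right, inner_sub_left]
    ring
  rw [hqe] at hyineq
  -- scalar relations
  have hM0 : ‖u0 - lam‖ ^ 2 = ‖u1 - lam‖ ^ 2 - 2 * ⟪u1 - lam, LA x1 + LB y1 - c⟫
      + ‖LA x1 + LB y1 - c‖ ^ 2 := by
    rw [show u0 - lam = (u1 - lam) - (LA x1 + LB y1 - c) by rw [hu1]; abel, norm_sub_sq_real]
  have hN0 : ‖LA (x0 - xs)‖ ^ 2 = ‖LA (x1 - xs)‖ ^ 2
      - 2 * ⟪LA (x1 - xs), LA (x1 - x0)⟫ + ‖LA (x1 - x0)‖ ^ 2 := by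
    rw [show x0 - xs = (x1 - xs) - (x1 - x0) by abel, map_sub, norm_sub_sq_real]
  have hGb : (⟪x0 - xs, Gm (x0 - xs)⟫ : ℝ) = ⟪x1 - xs, Gm (x1 - xs)⟫
      - 2 * ⟪Gm (x1 - x0), x1 - xs⟫ + ⟪x1 - x0, Gm (x1 - x0)⟫ := by
    rw [show x0 - xs = (x1 - xs) - (x1 - x0) by abel, expand_sub_quad Gm hGs]
  have hE : (⟪lam - us, LA x1 + LB y1 - c⟫ : ℝ) + ⟪u1 - lam, LA x1 + LB y1 - c⟫
      = ⟪u1, LA (x1 - xs)⟫ + ⟪u1, LB (y1 - ys)⟫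
        - ⟪us, LA (x1 - xs)⟫ - ⟪us, LB (y1 - ys)⟫ := by
    rw [hr']
    simp only [inner_sub_left, inner_add_right]
    ring
  have hS7 : (⟪LA (x1 - x0), LA x1 + LB y1 - c⟫ : ℝ)
      = ⟪LA (x1 - x0), LA (x1 - xs)⟫ + ⟪LA (x1 - x0), LB (y1 - ys)⟫ := by
    rw [hr', inner_add_right]
  have hbase : 2 * ⟪LA (x1 - x0), LA x1 + LB y1 - c⟫
      ≤ ‖LA (x1 - x0)‖ ^ 2 + ‖LA x1 + LB y1 - c‖ ^ 2 := by
    have h0 : (0:ℝ) ≤ ‖LA (x1 - x0) - (LA x1 + LB y1 - c)‖ ^ 2 := sq_nonneg _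
    rw [norm_sub_sq_real] at h0
    linarith
  have hF4 : ρ * ⟪LA (x1 - x0), LA x1 + LB y1 - c⟫
      ≤ ρ / 2 * ‖LA (x1 - x0)‖ ^ 2 + ρ / 2 * ‖LA x1 + LB y1 - c‖ ^ 2 := by
    have := mul_le_mul_of_nonneg_left hbase hρ.le
    linarith
  have hC1comm : (⟪LA (x1 - xs), LA (x1 - x0)⟫ : ℝ) = ⟪LA (x1 - x0), LA (x1 - xs)⟫ :=
    real_inner_comm _ _
  have hF7a : Lf / 2 * ‖x1 - x0‖ ^ 2 ≤ 1 / (2 * η) * ‖x1 - x0‖ ^ 2 :=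
    mul_le_mul_of_nonneg_right hηLf (sq_nonneg _)
  have hF7b : 1 / (2 * η) * ‖x1 - x0‖ ^ 2 ≤ 1 / (2 * η) * ⟪x1 - x0, Gm (x1 - x0)⟫ :=
    mul_le_mul_of_nonneg_left (hGpos _) (by positivity)
  have hRHSeq : 1 / (2 * η) * ((⟪x0 - xs, Gm (x0 - xs)⟫ + η * ρ * ‖LA (x0 - xs)‖ ^ 2)
        - (⟪x1 - xs, Gm (x1 - xs)⟫ + η * ρ * ‖LA (x1 - xs)‖ ^ 2))
      = 1 / (2 * η) * ⟪x0 - xs, Gm (x0 - xs)⟫ - 1 / (2 * η) * ⟪x1 - xs, Gm (x1 - xs)⟫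
        + ρ / 2 * ‖LA (x0 - xs)‖ ^ 2 - ρ / 2 * ‖LA (x1 - xs)‖ ^ 2 := by
    field_simp
    ring
  rw [hRHSeq]
  have hGbs : 1 / (2 * η) * ⟪x0 - xs, Gm (x0 - xs)⟫
      = 1 / (2 * η) * ⟪x1 - xs, Gm (x1 - xs)⟫
        - 1 / (2 * η) * (2 * ⟪Gm (x1 - x0), x1 - xs⟫)
        + 1 / (2 * η) * ⟪x1 - x0, Gm (x1 - x0)⟫ := by
    linear_combination (1 / (2 * η)) * hGb
  have hN0s : ρ / 2 * ‖LA (x0 - xs)‖ ^ 2 = ρ / 2 * ‖LA (x1 - xs)‖ ^ 2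
      - ρ * ⟪LA (x1 - xs), LA (x1 - x0)⟫ + ρ / 2 * ‖LA (x1 - x0)‖ ^ 2 := by
    linear_combination (ρ / 2) * hN0
  have hM0s : ρ / 2 * ‖u0 - lam‖ ^ 2 = ρ / 2 * ‖u1 - lam‖ ^ 2
      - ρ * ⟪u1 - lam, LA x1 + LB y1 - c⟫ + ρ / 2 * ‖LA x1 + LB y1 - c‖ ^ 2 := by
    linear_combination (ρ / 2) * hM0
  have hEs : ρ * ⟪lam - us, LA x1 + LB y1 - c⟫ + ρ * ⟪u1 - lam, LA x1 + LB y1 - c⟫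
      = ρ * ⟪u1, LA (x1 - xs)⟫ + ρ * ⟪u1, LB (y1 - ys)⟫
        - ρ * ⟪us, LA (x1 - xs)⟫ - ρ * ⟪us, LB (y1 - ys)⟫ := by
    linear_combination ρ * hE
  have hS7s : ρ * ⟪LA (x1 - x0), LA x1 + LB y1 - c⟫
      = ρ * ⟪LA (x1 - x0), LA (x1 - xs)⟫ + ρ * ⟪LA (x1 - x0), LB (y1 - ys)⟫ := by
    linear_combination ρ * hS7
  have hC1s : ρ * ⟪LA (x1 - xs), LA (x1 - x0)⟫ = ρ * ⟪LA (x1 - x0), LA (x1 - xs)⟫ := by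
    linear_combination ρ * hC1comm
  linarith [hfpart, hyineq, ha1, h1opt, h2opt, hGbs, hN0s, hM0s, hEs, hS7s, hC1s,
    hF4, hF7a, hF7b]
end step

section ergodic
variable {E Et F : Type*} [NormedAddCommGroup E] [InnerProductSpace ℝ E] [CompleteSpace E]
  [NormedAddCommGroup Et] [InnerProductSpace ℝ Et]
  [NormedAddCommGroup F] [InnerProductSpace ℝ F]

lemma admm_ergodic_abstract
    (f : E → ℝ) (gf : E → E) (g : Et → ℝ)
    (LA : E →ₗ[ℝ] F) (LB : Et →ₗ[ℝ] F)
    (Gm : E →ₗ[ℝ] E) (hGs : ∀ x y : E, ⟪Gm x, y⟫ = ⟪x, Gm y⟫)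
    (hGpos : ∀ x : E, ‖x‖ ^ 2 ≤ ⟪x, Gm x⟫)
    (c : F) (ρ Lf η : ℝ) (hρ : 0 < ρ) (hη0 : 0 < η) (hηLf : Lf / 2 ≤ 1 / (2 * η))
    (hconv : ConvexOn ℝ Set.univ f)
    (hdiff : ∀ x, HasGradientAt f (gf x) x)
    (hlip : ∀ x x', ‖gf x - gf x'‖ ≤ Lf * ‖x - x'‖)
    (hgconv : ConvexOn ℝ Set.univ g)
    (xs : E) (ys : Et) (us : F) (v : Et)
    (hopt1 : ∀ w : E, ⟪gf xs, w⟫ = -(ρ * ⟪us, LA w⟫))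
    (hopt2 : ∀ w : Et, ⟪v, w⟫ = -(ρ * ⟪us, LB w⟫))
    (hopt3 : LA xs + LB ys = c)
    (T : ℕ) (hT : 1 ≤ T)
    (x : ℕ → E) (y : ℕ → Et) (u : ℕ → F)
    (hy : ∀ t, 1 ≤ t → t ≤ T → IsMinOn (fun yv => g yv + ρ / 2 *
      ‖LA (x (t - 1)) + LB yv - c + u (t - 1)‖ ^ 2) Set.univ (y t))
    (hx : ∀ t, 1 ≤ t → t ≤ T → IsMinOn (fun xv => ⟪gf (x (t - 1)), xv⟫ + ρ / 2 *
      ‖LA xv + LB (y t) - c + u (t - 1)‖ ^ 2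
      + 1 / (2 * η) * ⟪xv - x (t - 1), Gm (xv - x (t - 1))⟫) Set.univ (x t))
    (hu : ∀ t, 1 ≤ t → t ≤ T → u t = u (t - 1) + LA (x t) + LB (y t) - c)
    (ζ : ℝ) (hζ : 0 < ζ) :
    (f ((T : ℝ)⁻¹ • ∑ t ∈ Icc 1 T, x t) - f xs
        - ⟪gf xs, ((T : ℝ)⁻¹ • ∑ t ∈ Icc 1 T, x t) - xs⟫
      + (g ((T : ℝ)⁻¹ • ∑ t ∈ Icc 1 T, y t) - g ys
        - ⟪v, ((T : ℝ)⁻¹ • ∑ t ∈ Icc 1 T, y t) - ys⟫))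
      + ζ * ‖LA ((T : ℝ)⁻¹ • ∑ t ∈ Icc 1 T, x t)
          + LB ((T : ℝ)⁻¹ • ∑ t ∈ Icc 1 T, y t) - c‖
    ≤ 1 / (2 * η * (T : ℝ)) * (⟪x 0 - xs, Gm (x 0 - xs)⟫ + η * ρ * ‖LA (x 0 - xs)‖ ^ 2)
      + ρ / (T : ℝ) * (‖u 0 - us‖ ^ 2 + ζ ^ 2 / ρ ^ 2) := by
  classical
  have hTpos : (0:ℝ) < (T:ℝ) := by exact_mod_cast Nat.lt_of_lt_of_le Nat.zero_lt_one hT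
  have hTne : (T:ℝ) ≠ 0 := ne_of_gt hTpos
  set xbar : E := (T : ℝ)⁻¹ • ∑ t ∈ Icc 1 T, x t with hxbar
  set ybar : Et := (T : ℝ)⁻¹ • ∑ t ∈ Icc 1 T, y t with hybar
  set rbar : F := LA xbar + LB ybar - c with hrbar
  have hcard : (Icc 1 T).card = T := by rw [Nat.card_Icc]; omega
  -- main claim for arbitrary dual point lam
  have hkey : ∀ lam : F,
      (f xbar - f xs - ⟪gf xs, xbar - xs⟫ + (g ybar - g ys - ⟪v, ybar - ys⟫))
        + ρ * ⟪lam - us, rbar⟫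
      ≤ (T:ℝ)⁻¹ * (1 / (2 * η) * (⟪x 0 - xs, Gm (x 0 - xs)⟫ + η * ρ * ‖LA (x 0 - xs)‖ ^ 2)
          + ρ / 2 * ‖u 0 - lam‖ ^ 2) := by
    intro lam
    set Φ : ℕ → ℝ := fun t => 1 / (2 * η) * (⟪x t - xs, Gm (x t - xs)⟫
      + η * ρ * ‖LA (x t - xs)‖ ^ 2) + ρ / 2 * ‖u t - lam‖ ^ 2 with hΦ
    have hstep : ∀ t ∈ Icc 1 T,
        (f (x t) - f xs - ⟪gf xs, x t - xs⟫ + (g (y t) - g ys - ⟪v, y t - ys⟫))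
          + ρ * ⟪lam - us, LA (x t) + LB (y t) - c⟫
        ≤ Φ (t - 1) - Φ t := by
      intro t ht
      obtain ⟨ht1, ht2⟩ := mem_Icc.mp ht
      have hs := admm_step f gf g LA LB Gm hGs hGpos c ρ Lf η hρ hη0 hηLf hconv hdiff hlip
        hgconv xs ys us v hopt1 hopt2 hopt3 (x (t-1)) (x t) (y t) (u (t-1)) (u t)
        (hu t ht1 ht2) (hy t ht1 ht2) (hx t ht1 ht2) lam
      have he : Φ (t - 1) - Φ t
          = 1 / (2 * η) * ((⟪x (t-1) - xs, Gm (x (t-1) - xs)⟫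
              + η * ρ * ‖LA (x (t-1) - xs)‖ ^ 2)
            - (⟪x t - xs, Gm (x t - xs)⟫ + η * ρ * ‖LA (x t - xs)‖ ^ 2))
          + ρ / 2 * (‖u (t-1) - lam‖ ^ 2 - ‖u t - lam‖ ^ 2) := by
        simp only [hΦ]; ring
      rw [he]
      exact hs
    have hsum := Finset.sum_le_sum hstep
    have htel : ∑ t ∈ Icc 1 T, (Φ (t-1) - Φ t) = Φ 0 - Φ T := by
      rw [← Finset.Ico_add_one_right_eq_Icc, Finset.sum_Ico_eq_sum_range]
      have h : ∀ i, Φ (1 + i - 1) - Φ (1 + i) = Φ i - Φ (i+1) := by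
        intro i; congr 2 <;> omega
      calc ∑ i ∈ range (T + 1 - 1), (Φ (1 + i - 1) - Φ (1 + i))
          = ∑ i ∈ range T, (Φ i - Φ (i+1)) := by
            rw [show T + 1 - 1 = T from rfl]; exact Finset.sum_congr rfl fun i _ => h i
        _ = Φ 0 - Φ T := Finset.sum_range_sub' Φ T
    have hΦT : 0 ≤ Φ T := by
      have h1 : (0:ℝ) ≤ ⟪x T - xs, Gm (x T - xs)⟫ := le_trans (sq_nonneg _) (hGpos _)
      have h2 : (0:ℝ) ≤ η * ρ * ‖LA (x T - xs)‖ ^ 2 := by positivity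
      have h3 : (0:ℝ) ≤ ρ / 2 * ‖u T - lam‖ ^ 2 := by positivity
      have h4 : (0:ℝ) ≤ 1 / (2 * η) := by positivity
      simp only [hΦ]
      nlinarith
    rw [htel] at hsum
    -- Jensen and averaging
    have hwsum : ∑ _t ∈ Icc 1 T, (T:ℝ)⁻¹ = 1 := by
      rw [Finset.sum_const, hcard, nsmul_eq_mul, mul_inv_cancel₀ hTne]
    have hjf : f xbar ≤ (T:ℝ)⁻¹ * ∑ t ∈ Icc 1 T, f (x t) := by
      have := hconv.map_sum_le (t := Icc 1 T) (w := fun _ => (T:ℝ)⁻¹) (p := x)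
        (fun _ _ => by positivity) hwsum (fun _ _ => Set.mem_univ _)
      rw [hxbar, Finset.smul_sum]
      simpa [smul_eq_mul, Finset.mul_sum] using this
    have hjg : g ybar ≤ (T:ℝ)⁻¹ * ∑ t ∈ Icc 1 T, g (y t) := by
      have := hgconv.map_sum_le (t := Icc 1 T) (w := fun _ => (T:ℝ)⁻¹) (p := y)
        (fun _ _ => by positivity) hwsum (fun _ _ => Set.mem_univ _)
      rw [hybar, Finset.smul_sum]
      simpa [smul_eq_mul, Finset.mul_sum] using this
    -- linear averaging identities
    have hxs : xbar - xs = (T:ℝ)⁻¹ • ∑ t ∈ Icc 1 T, (x t - xs) := by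
      rw [Finset.sum_sub_distrib, Finset.sum_const, hcard, smul_sub, hxbar]
      congr 1
      rw [← Nat.cast_smul_eq_nsmul ℝ, smul_smul, inv_mul_cancel₀ hTne, one_smul]
    have hys : ybar - ys = (T:ℝ)⁻¹ • ∑ t ∈ Icc 1 T, (y t - ys) := by
      rw [Finset.sum_sub_distrib, Finset.sum_const, hcard, smul_sub, hybar]
      congr 1
      rw [← Nat.cast_smul_eq_nsmul ℝ, smul_smul, inv_mul_cancel₀ hTne, one_smul]
    have hlin1 : (⟪gf xs, xbar - xs⟫ : ℝ) = (T:ℝ)⁻¹ * ∑ t ∈ Icc 1 T, ⟪gf xs, x t - xs⟫ := by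
      rw [hxs, real_inner_smul_right, inner_sum]
    have hlin2 : (⟪v, ybar - ys⟫ : ℝ) = (T:ℝ)⁻¹ * ∑ t ∈ Icc 1 T, ⟪v, y t - ys⟫ := by
      rw [hys, real_inner_smul_right, inner_sum]
    have hrbar2 : rbar = (T:ℝ)⁻¹ • ∑ t ∈ Icc 1 T, (LA (x t) + LB (y t) - c) := by
      rw [hrbar, hxbar, hybar]
      rw [Finset.sum_sub_distrib, Finset.sum_add_distrib, Finset.sum_const, hcard]
      rw [LinearMap.map_smul, LinearMap.map_smul, map_sum, map_sum]
      rw [smul_sub, smul_add]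
      congr 1
      rw [← Nat.cast_smul_eq_nsmul ℝ, smul_smul, inv_mul_cancel₀ hTne, one_smul]
    have hlin3 : (⟪lam - us, rbar⟫ : ℝ)
        = (T:ℝ)⁻¹ * ∑ t ∈ Icc 1 T, ⟪lam - us, LA (x t) + LB (y t) - c⟫ := by
      rw [hrbar2, real_inner_smul_right, inner_sum]
    -- sum splitting
    have hsplit : ∑ t ∈ Icc 1 T,
        ((f (x t) - f xs - ⟪gf xs, x t - xs⟫ + (g (y t) - g ys - ⟪v, y t - ys⟫))
          + ρ * ⟪lam - us, LA (x t) + LB (y t) - c⟫)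
        = (∑ t ∈ Icc 1 T, f (x t)) - T * f xs - (∑ t ∈ Icc 1 T, ⟪gf xs, x t - xs⟫)
          + ((∑ t ∈ Icc 1 T, g (y t)) - T * g ys - (∑ t ∈ Icc 1 T, ⟪v, y t - ys⟫))
          + ρ * ∑ t ∈ Icc 1 T, ⟪lam - us, LA (x t) + LB (y t) - c⟫ := by
      rw [Finset.sum_add_distrib, Finset.sum_add_distrib, Finset.sum_sub_distrib,
        Finset.sum_sub_distrib, Finset.sum_sub_distrib, Finset.sum_sub_distrib,
        Finset.sum_const, Finset.sum_const, hcard, ← Finset.mul_sum]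
      simp [nsmul_eq_mul]
    rw [hsplit] at hsum
    -- combine
    have hmul := mul_le_mul_of_nonneg_left hsum (le_of_lt (inv_pos.mpr hTpos))
    have hfin1 : (T:ℝ)⁻¹ * ((T:ℝ) * f xs) = f xs := by field_simp
    have hfin2 : (T:ℝ)⁻¹ * ((T:ℝ) * g ys) = g ys := by field_simp
    rw [hlin1, hlin2, hlin3]
    have hexp : (T:ℝ)⁻¹ * ((∑ t ∈ Icc 1 T, f (x t)) - T * f xs
          - (∑ t ∈ Icc 1 T, ⟪gf xs, x t - xs⟫)
          + ((∑ t ∈ Icc 1 T, g (y t)) - T * g ys - (∑ t ∈ Icc 1 T, ⟪v, y t - ys⟫))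
          + ρ * ∑ t ∈ Icc 1 T, ⟪lam - us, LA (x t) + LB (y t) - c⟫)
        = (T:ℝ)⁻¹ * (∑ t ∈ Icc 1 T, f (x t)) - f xs
          - (T:ℝ)⁻¹ * (∑ t ∈ Icc 1 T, ⟪gf xs, x t - xs⟫)
          + ((T:ℝ)⁻¹ * (∑ t ∈ Icc 1 T, g (y t)) - g ys
            - (T:ℝ)⁻¹ * (∑ t ∈ Icc 1 T, ⟪v, y t - ys⟫))
          + ρ * ((T:ℝ)⁻¹ * ∑ t ∈ Icc 1 T, ⟪lam - us, LA (x t) + LB (y t) - c⟫) := by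
      field_simp
    rw [hexp] at hmul
    have hΦ0 : Φ 0 = 1 / (2 * η) * (⟪x 0 - xs, Gm (x 0 - xs)⟫
        + η * ρ * ‖LA (x 0 - xs)‖ ^ 2) + ρ / 2 * ‖u 0 - lam‖ ^ 2 := rfl
    have hdrop : (T:ℝ)⁻¹ * (Φ 0 - Φ T) ≤ (T:ℝ)⁻¹ * Φ 0 := by
      apply mul_le_mul_of_nonneg_left _ (le_of_lt (inv_pos.mpr hTpos))
      linarith
    have hΦ0s : (T:ℝ)⁻¹ * Φ 0 = (T:ℝ)⁻¹ * (1 / (2 * η) * (⟪x 0 - xs, Gm (x 0 - xs)⟫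
        + η * ρ * ‖LA (x 0 - xs)‖ ^ 2) + ρ / 2 * ‖u 0 - lam‖ ^ 2) := by rw [hΦ0]
    linarith [hjf, hjg, hmul, hdrop, hΦ0s]
  -- choose lam
  set sdir : F := if rbar = 0 then 0 else ‖rbar‖⁻¹ • rbar with hsdir
  have hsnorm : ‖sdir‖ ≤ 1 := by
    rw [hsdir]
    split_ifs with h
    · simp
    · rw [norm_smul, norm_inv, norm_norm, inv_mul_cancel₀ (norm_ne_zero_iff.mpr h)]
  have hsinner : (⟪sdir, rbar⟫ : ℝ) = ‖rbar‖ := by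
    rw [hsdir]
    split_ifs with h
    · simp [h]
    · rw [real_inner_smul_left, real_inner_self_eq_norm_sq]
      field_simp [norm_ne_zero_iff.mpr h]
  set lam : F := us + (ζ / ρ) • sdir with hlam
  have hlamsub : lam - us = (ζ / ρ) • sdir := by rw [hlam]; abel
  have hinner : ρ * ⟪lam - us, rbar⟫ = ζ * ‖rbar‖ := by
    rw [hlamsub, real_inner_smul_left, hsinner]
    field_simp
  have hunorm : ‖u 0 - lam‖ ^ 2 ≤ 2 * ‖u 0 - us‖ ^ 2 + 2 * (ζ ^ 2 / ρ ^ 2) := by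
    have hv : u 0 - lam = (u 0 - us) - (ζ / ρ) • sdir := by rw [hlam]; abel
    rw [hv, norm_sub_sq_real]
    have h1 : |(⟪u 0 - us, (ζ / ρ) • sdir⟫ : ℝ)| ≤ ‖u 0 - us‖ * ‖(ζ / ρ) • sdir‖ :=
      abs_real_inner_le_norm _ _
    have h2 : ‖(ζ / ρ) • sdir‖ ^ 2 ≤ ζ ^ 2 / ρ ^ 2 := by
      rw [norm_smul, Real.norm_eq_abs]
      rw [mul_pow, sq_abs]
      have h3 : ‖sdir‖ ^ 2 ≤ 1 := by nlinarith [norm_nonneg sdir]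
      have h4 : (ζ / ρ) ^ 2 = ζ ^ 2 / ρ ^ 2 := by ring
      nlinarith [sq_nonneg (ζ / ρ)]
    have h5 := abs_le.mp h1
    nlinarith [sq_nonneg (‖u 0 - us‖ - ‖(ζ / ρ) • sdir‖), norm_nonneg (u 0 - us),
      norm_nonneg ((ζ / ρ) • sdir)]
  have hk := hkey lam
  rw [hinner] at hk
  have hb : (T:ℝ)⁻¹ * (ρ / 2 * ‖u 0 - lam‖ ^ 2)
      ≤ ρ / (T : ℝ) * (‖u 0 - us‖ ^ 2 + ζ ^ 2 / ρ ^ 2) := by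
    have h1 : ρ / 2 * ‖u 0 - lam‖ ^ 2 ≤ ρ / 2 * (2 * ‖u 0 - us‖ ^ 2 + 2 * (ζ ^ 2 / ρ ^ 2)) :=
      mul_le_mul_of_nonneg_left hunorm (by positivity)
    have h2 := mul_le_mul_of_nonneg_left h1 (le_of_lt (inv_pos.mpr hTpos))
    have h3 : (T:ℝ)⁻¹ * (ρ / 2 * (2 * ‖u 0 - us‖ ^ 2 + 2 * (ζ ^ 2 / ρ ^ 2)))
        = ρ / (T : ℝ) * (‖u 0 - us‖ ^ 2 + ζ ^ 2 / ρ ^ 2) := by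
      field_simp
    linarith
  have hc : (T:ℝ)⁻¹ * (1 / (2 * η) * (⟪x 0 - xs, Gm (x 0 - xs)⟫
        + η * ρ * ‖LA (x 0 - xs)‖ ^ 2))
      = 1 / (2 * η * (T : ℝ)) * (⟪x 0 - xs, Gm (x 0 - xs)⟫
        + η * ρ * ‖LA (x 0 - xs)‖ ^ 2) := by
    field_simp
  linarith [hk]
end ergodic

lemma toEuclideanLin_transpose_inner {m n : ℕ} (M : Matrix (Fin m) (Fin n) ℝ)
    (x : EuclideanSpace ℝ (Fin n)) (y : EuclideanSpace ℝ (Fin m)) :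
    ⟪Matrix.toEuclideanLin M x, y⟫ = ⟪x, Matrix.toEuclideanLin Mᵀ y⟫ := by
  rw [← Matrix.conjTranspose_eq_transpose_of_trivial,
    Matrix.toEuclideanLin_conjTranspose_eq_adjoint, LinearMap.adjoint_inner_right]

lemma psd_inner_nonneg {n : ℕ} {M : Matrix (Fin n) (Fin n) ℝ} (hM : M.PosSemidef)
    (x : EuclideanSpace ℝ (Fin n)) : 0 ≤ ⟪x, Matrix.toEuclideanLin M x⟫ := by
  have h := hM.dotProduct_mulVec_nonneg (WithLp.ofLp x)
  simpa [PiLp.inner_apply, Matrix.toEuclideanLin_apply, dotProduct,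
    RCLike.inner_apply, mul_comm] using h

lemma toEuclideanLin_one_apply {n : ℕ} (x : EuclideanSpace ℝ (Fin n)) :
    Matrix.toEuclideanLin (1 : Matrix (Fin n) (Fin n) ℝ) x = x := by
  simp [Matrix.toEuclideanLin_apply, Matrix.one_mulVec]

lemma toEuclideanLin_mul_apply {l m n : ℕ} (M : Matrix (Fin l) (Fin m) ℝ)
    (N : Matrix (Fin m) (Fin n) ℝ) (x : EuclideanSpace ℝ (Fin n)) :
    Matrix.toEuclideanLin (M * N) x = Matrix.toEuclideanLin M (Matrix.toEuclideanLin N x) := by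
  simp [Matrix.toEuclideanLin_apply, Matrix.mulVec_mulVec]


/-- Paper's Corollary 2: ergodic `O(1/T)` rate of linearized batch ADMM.
With `f` convex, `L_f`-smooth, `g` convex, a KKT point `(x_*, y_*, u_*)` (subgradient `v`
of `g` at `y_*`), `G ⪰ I` symmetric, `0 < η < 1/L_f`, and iterates generated by the ADMM
updates for `t = 1, …, T`, the averages `x̄ = (1/T)∑ x_t`, `ȳ = (1/T)∑ y_t` satisfy, for
every `ζ > 0`,
`R(x̄, ȳ) + ζ‖Ax̄ + Bȳ - c‖ ≤ (1/(2ηT))‖x₀ - x_*‖²_{G+ηρAᵀA} + (ρ/T)(‖u₀ - u_*‖² + ζ²/ρ²)`. -/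
theorem batch_admm_ergodic_rate {d dt p : ℕ}
    (f : EuclideanSpace ℝ (Fin d) → ℝ)
    (gf : EuclideanSpace ℝ (Fin d) → EuclideanSpace ℝ (Fin d))
    (g : EuclideanSpace ℝ (Fin dt) → ℝ)
    (A : Matrix (Fin p) (Fin d) ℝ) (B : Matrix (Fin p) (Fin dt) ℝ)
    (c : EuclideanSpace ℝ (Fin p)) (ρ Lf : ℝ) (hρ : 0 < ρ) (hLf : 0 < Lf)
    (hconv : ConvexOn ℝ Set.univ f)
    (hdiff : ∀ x, HasGradientAt f (gf x) x)
    (hlip : ∀ x x', ‖gf x - gf x'‖ ≤ Lf * ‖x - x'‖)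
    (hgconv : ConvexOn ℝ Set.univ g)
    (xs : EuclideanSpace ℝ (Fin d)) (ys : EuclideanSpace ℝ (Fin dt))
    (us : EuclideanSpace ℝ (Fin p)) (v : EuclideanSpace ℝ (Fin dt))
    (hsub : ∀ y', g ys + ⟪v, y' - ys⟫ ≤ g y')
    (hopt1 : gf xs + ρ • Matrix.toEuclideanLin Aᵀ us = 0)
    (hopt2 : v + ρ • Matrix.toEuclideanLin Bᵀ us = 0)
    (hopt3 : Matrix.toEuclideanLin A xs + Matrix.toEuclideanLin B ys = c)
    (G : Matrix (Fin d) (Fin d) ℝ) (hGsymm : G.IsSymm)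
    (hG : (G - (1 : Matrix (Fin d) (Fin d) ℝ)).PosSemidef)
    (η : ℝ) (hη0 : 0 < η) (hη1 : η < 1 / Lf)
    (T : ℕ) (hT : 1 ≤ T)
    (x : ℕ → EuclideanSpace ℝ (Fin d)) (y : ℕ → EuclideanSpace ℝ (Fin dt))
    (u : ℕ → EuclideanSpace ℝ (Fin p))
    (hy : ∀ t, 1 ≤ t → t ≤ T →
      IsMinOn (fun yv => g yv + ρ / 2 *
          ‖Matrix.toEuclideanLin A (x (t - 1)) + Matrix.toEuclideanLin B yv - c
            + u (t - 1)‖ ^ 2)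
        Set.univ (y t))
    (hx : ∀ t, 1 ≤ t → t ≤ T →
      IsMinOn (fun xv => ⟪gf (x (t - 1)), xv⟫ + ρ / 2 *
          ‖Matrix.toEuclideanLin A xv + Matrix.toEuclideanLin B (y t) - c
            + u (t - 1)‖ ^ 2
          + 1 / (2 * η) * ⟪xv - x (t - 1), Matrix.toEuclideanLin G (xv - x (t - 1))⟫)
        Set.univ (x t))
    (hu : ∀ t, 1 ≤ t → t ≤ T →
      u t = u (t - 1) + Matrix.toEuclideanLin A (x t)
        + Matrix.toEuclideanLin B (y t) - c) :
    ∀ ζ : ℝ, 0 < ζ →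
      let xbar := (T : ℝ)⁻¹ • ∑ t ∈ Finset.Icc 1 T, x t
      let ybar := (T : ℝ)⁻¹ • ∑ t ∈ Finset.Icc 1 T, y t
      (f xbar - f xs - ⟪gf xs, xbar - xs⟫ + (g ybar - g ys - ⟪v, ybar - ys⟫))
          + ζ * ‖Matrix.toEuclideanLin A xbar + Matrix.toEuclideanLin B ybar - c‖
        ≤ 1 / (2 * η * (T : ℝ)) *
            ⟪x 0 - xs, Matrix.toEuclideanLin (G + (η * ρ) • (Aᵀ * A)) (x 0 - xs)⟫
          + ρ / (T : ℝ) * (‖u 0 - us‖ ^ 2 + ζ ^ 2 / ρ ^ 2) := by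
  intro ζ hζ
  have hGs : ∀ a b : EuclideanSpace ℝ (Fin d),
      ⟪Matrix.toEuclideanLin G a, b⟫ = ⟪a, Matrix.toEuclideanLin G b⟫ := by
    intro a b
    rw [toEuclideanLin_transpose_inner, hGsymm]
  have hGpos : ∀ a : EuclideanSpace ℝ (Fin d), ‖a‖ ^ 2 ≤ ⟪a, Matrix.toEuclideanLin G a⟫ := by
    intro a
    have h := psd_inner_nonneg hG a
    rw [map_sub, LinearMap.sub_apply, inner_sub_right, toEuclideanLin_one_apply,
      real_inner_self_eq_norm_sq] at h
    linarith
  have hopt1' : ∀ w : EuclideanSpace ℝ (Fin d),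
      ⟪gf xs, w⟫ = -(ρ * ⟪us, Matrix.toEuclideanLin A w⟫) := by
    intro w
    have h : gf xs = -(ρ • Matrix.toEuclideanLin Aᵀ us) := by
      rw [eq_neg_iff_add_eq_zero]; exact hopt1
    rw [h, inner_neg_left, real_inner_smul_left, toEuclideanLin_transpose_inner,
      Matrix.transpose_transpose]
  have hopt2' : ∀ w : EuclideanSpace ℝ (Fin dt),
      ⟪v, w⟫ = -(ρ * ⟪us, Matrix.toEuclideanLin B w⟫) := by
    intro w
    have h : v = -(ρ • Matrix.toEuclideanLin Bᵀ us) := by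
      rw [eq_neg_iff_add_eq_zero]; exact hopt2
    rw [h, inner_neg_left, real_inner_smul_left, toEuclideanLin_transpose_inner,
      Matrix.transpose_transpose]
  have hηLf : Lf / 2 ≤ 1 / (2 * η) := by
    have h1 : η * Lf < 1 := (lt_div_iff₀ hLf).mp hη1
    rw [div_le_div_iff₀ (by norm_num) (by positivity)]
    nlinarith
  have habs := admm_ergodic_abstract f gf g (Matrix.toEuclideanLin A)
    (Matrix.toEuclideanLin B) (Matrix.toEuclideanLin G) hGs hGpos c ρ Lf η hρ hη0 hηLf
    hconv hdiff hlip hgconv xs ys us v hopt1' hopt2' hopt3 T hT x y u hy hx hu ζ hζ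
  have hQ : (⟪x 0 - xs, Matrix.toEuclideanLin (G + (η * ρ) • (Aᵀ * A)) (x 0 - xs)⟫ : ℝ)
      = ⟪x 0 - xs, Matrix.toEuclideanLin G (x 0 - xs)⟫
        + η * ρ * ‖Matrix.toEuclideanLin A (x 0 - xs)‖ ^ 2 := by
    rw [map_add, LinearEquiv.map_smul, LinearMap.add_apply, LinearMap.smul_apply,
      inner_add_right, real_inner_smul_right, toEuclideanLin_mul_apply]
    congr 1
    rw [← toEuclideanLin_transpose_inner, real_inner_self_eq_norm_sq]
  rw [hQ]
  exact habs
end
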